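/- arXiv:1405.1504 — 11 statements merged into one kernel-verified Lean document; each statement's English description precedes it below -/
import Mathlib

section
/- Let 1/2 ≤ a ≤ 1. Then ζ(σ,a) < 0 for every real σ with 0 < σ < 1; in particular ζ(σ,a) is real and strictly negative on the interval (0,1). -/
open Complex intervalIntegral Set Filter

namespace HZNeg

noncomputable def e (a : ℝ) (n : ℕ) (s : ℂ) : ℂ :=
  (s - 1) * (((n : ℝ) + a : ℝ) : ℂ) ^ (-s) +
    ((((n : ℝ) + a + 1 : ℝ) : ℂ) ^ (1 - s) - (((n : ℝ) + a : ℝ) : ℂ) ^ (1 - s))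

lemma cpow_tele {x : ℝ} (hx : 0 < x) (s : ℂ) :
    (1 - s) * ∫ t in x..(x + 1), (t : ℂ) ^ (-s)
      = ((x + 1 : ℝ) : ℂ) ^ (1 - s) - ((x : ℝ) : ℂ) ^ (1 - s) := by
  rcases eq_or_ne s 1 with rfl | hs
  · norm_num
  · have h0 : (0:ℝ) ∉ uIcc x (x + 1) := by
      rw [Set.uIcc_of_le (by linarith)]
      intro h
      exact absurd h.1 (by linarith)
    rw [integral_cpow (Or.inr ⟨by simpa [neg_eq_iff_eq_neg] using fun h => hs (by
        rw [← neg_neg s, h]; norm_num), h0⟩)]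
    have h1 : -s + 1 = 1 - s := by ring
    rw [h1, mul_div_cancel₀ _ (sub_ne_zero.mpr (Ne.symm hs))]

lemma e_eq_integral {a : ℝ} (ha : 0 < a) (n : ℕ) (s : ℂ) :
    e a n s = (s - 1) * ((((n : ℝ) + a : ℝ) : ℂ) ^ (-s)
      - ∫ t in ((n:ℝ) + a)..((n:ℝ) + a + 1), (t : ℂ) ^ (-s)) := by
  have hx : (0:ℝ) < (n:ℝ) + a := by positivity
  have := cpow_tele hx s
  rw [e]
  linear_combination -this

lemma contOn (s : ℂ) {c d : ℝ} (hc : 0 < c) (hcd : c ≤ d) :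
    ContinuousOn (fun t : ℝ => (t : ℂ) ^ (-s)) (uIcc c d) := by
  intro t ht
  rw [Set.uIcc_of_le hcd] at ht
  have htpos : 0 < t := lt_of_lt_of_le hc ht.1
  exact ((continuousAt_cpow_const (ofReal_mem_slitPlane.2 htpos)).comp
    continuous_ofReal.continuousAt).continuousWithinAt

lemma norm_cpow_sub_le {x t : ℝ} {s : ℂ} (hs : 0 < s.re) (hx : 0 < x) (hxt : x ≤ t) :
    ‖((x : ℝ) : ℂ) ^ (-s) - ((t : ℝ) : ℂ) ^ (-s)‖ ≤ ‖s‖ * x ^ (-s.re - 1) * (t - x) := by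
  have key := Convex.norm_image_sub_le_of_norm_hasDerivWithin_le
    (f := fun u : ℝ => (u : ℂ) ^ (-s)) (f' := fun u : ℝ => -s * (u : ℂ) ^ (-s - 1))
    (C := ‖s‖ * x ^ (-s.re - 1)) (s := Icc x t) ?_ ?_ (convex_Icc x t)
    (Set.left_mem_Icc.2 hxt) (Set.right_mem_Icc.2 hxt)
  · rw [norm_sub_rev] at key
    calc ‖((x : ℝ) : ℂ) ^ (-s) - ((t : ℝ) : ℂ) ^ (-s)‖ ≤ ‖s‖ * x ^ (-s.re - 1) * ‖t - x‖ := key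
    _ = ‖s‖ * x ^ (-s.re - 1) * (t - x) := by
          rw [Real.norm_eq_abs, _root_.abs_of_nonneg (by linarith : (0:ℝ) ≤ t - x)]
  · intro u hu
    have hupos : 0 < u := lt_of_lt_of_le hx hu.1
    have h := (Complex.hasStrictDerivAt_cpow_const (c := -s)
      (ofReal_mem_slitPlane.2 hupos)).hasDerivAt.comp_ofReal (z := u)
    exact h.hasDerivWithinAt
  · intro u hu
    have hupos : 0 < u := lt_of_lt_of_le hx hu.1
    rw [norm_mul, norm_neg]
    have h1 : ‖(u : ℂ) ^ (-s - 1)‖ = u ^ (-s.re - 1) := by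
      rw [norm_cpow_eq_rpow_re_of_pos hupos, Complex.sub_re,
        Complex.neg_re, Complex.one_re]
    rw [h1]
    exact mul_le_mul_of_nonneg_left
      (Real.rpow_le_rpow_of_nonpos hx hu.1 (by linarith)) (norm_nonneg s)

lemma norm_e_le {a : ℝ} (ha : 1/2 ≤ a) {s : ℂ} (hs : 0 < s.re) (n : ℕ) :
    ‖e a n s‖ ≤ ‖s - 1‖ * ‖s‖ * ((n : ℝ) + 1/2) ^ (-s.re - 1) := by
  have ha0 : (0:ℝ) < a := by linarith
  set x : ℝ := (n : ℝ) + a with hxdef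
  have hx : 0 < x := by positivity
  have hx2 : (n : ℝ) + 1/2 ≤ x := by rw [hxdef]; linarith
  have hint : (∫ t in x..(x + 1), ((x : ℝ) : ℂ) ^ (-s) - (t : ℂ) ^ (-s))
      = ((x : ℝ) : ℂ) ^ (-s) - ∫ t in x..(x + 1), (t : ℂ) ^ (-s) := by
    rw [intervalIntegral.integral_sub intervalIntegrable_const
      ((contOn s hx (by linarith)).intervalIntegrable), intervalIntegral.integral_const]
    simp
  have hbound : ‖((x : ℝ) : ℂ) ^ (-s) - ∫ t in x..(x + 1), (t : ℂ) ^ (-s)‖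
      ≤ ‖s‖ * x ^ (-s.re - 1) := by
    rw [← hint]
    have := intervalIntegral.norm_integral_le_of_norm_le_const
      (C := ‖s‖ * x ^ (-s.re - 1)) (a := x) (b := x + 1)
      (f := fun t : ℝ => ((x : ℝ) : ℂ) ^ (-s) - (t : ℂ) ^ (-s)) ?_
    · simpa using this
    · intro t ht
      rw [Set.uIoc_of_le (by linarith)] at ht
      calc ‖((x : ℝ) : ℂ) ^ (-s) - ((t : ℝ) : ℂ) ^ (-s)‖
          ≤ ‖s‖ * x ^ (-s.re - 1) * (t - x) := norm_cpow_sub_le hs hx ht.1.le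
        _ ≤ ‖s‖ * x ^ (-s.re - 1) * 1 :=
            mul_le_mul_of_nonneg_left (by linarith [ht.2]) (by positivity)
        _ = ‖s‖ * x ^ (-s.re - 1) := mul_one _
  rw [e_eq_integral ha0 n s]
  rw [norm_mul]
  calc ‖s - 1‖ * ‖((x : ℝ) : ℂ) ^ (-s) - ∫ t in x..(x + 1), (t : ℂ) ^ (-s)‖
      ≤ ‖s - 1‖ * (‖s‖ * x ^ (-s.re - 1)) :=
        mul_le_mul_of_nonneg_left hbound (norm_nonneg _)
    _ ≤ ‖s - 1‖ * (‖s‖ * ((n : ℝ) + 1/2) ^ (-s.re - 1)) :=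
        mul_le_mul_of_nonneg_left (mul_le_mul_of_nonneg_left
          (Real.rpow_le_rpow_of_nonpos (by positivity) hx2 (by linarith))
          (norm_nonneg _)) (norm_nonneg _)
    _ = ‖s - 1‖ * ‖s‖ * ((n : ℝ) + 1/2) ^ (-s.re - 1) := by ring

lemma summable_u {δ : ℝ} (hδ : 0 < δ) :
    Summable (fun n : ℕ => ((n : ℝ) + 1/2) ^ (-δ - 1)) := by
  rw [← summable_nat_add_iff 1]
  have h : Summable (fun n : ℕ => ((n : ℝ)) ^ (-δ - 1)) :=
    Real.summable_nat_rpow.mpr (by linarith)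
  have h1 : Summable (fun n : ℕ => ((n + 1 : ℕ) : ℝ) ^ (-δ - 1)) :=
    (summable_nat_add_iff 1).mpr h
  refine h1.of_nonneg_of_le (fun n => by positivity) (fun n => ?_)
  apply Real.rpow_le_rpow_of_nonpos (by positivity) (by push_cast; linarith) (by linarith)

lemma summable_e {a : ℝ} (ha : 1/2 ≤ a) {s : ℂ} (hs : 0 < s.re) :
    Summable (fun n => e a n s) := by
  apply Summable.of_norm_bounded (((summable_u hs).mul_left (‖s - 1‖ * ‖s‖)))
  exact fun n => by simpa [mul_assoc] using norm_e_le ha hs n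

open HurwitzZeta in
lemma key_gt_one {a : ℝ} (ha : 1/2 ≤ a) (ha' : a ≤ 1) {s : ℂ} (hs : 1 < s.re) :
    (s - 1) * hurwitzZeta (a : UnitAddCircle) s = ((a : ℝ) : ℂ) ^ (1 - s) + ∑' n, e a n s := by
  have ha0 : (0:ℝ) < a := by linarith
  have hsum0 := hasSum_hurwitzZeta_of_one_lt_re (a := a) ⟨by linarith, ha'⟩ hs
  have hsum1 : HasSum (fun n : ℕ => (s - 1) * (((n : ℝ) + a : ℝ) : ℂ) ^ (-s))
      ((s - 1) * hurwitzZeta (a : UnitAddCircle) s) := by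
    apply HasSum.mul_left
    convert hsum0 using 2 with n
    · rfl
    rw [cpow_neg, one_div]
    norm_num
  have he : Summable (fun n => e a n s) := summable_e ha (by linarith)
  -- partial sums of e
  set f : ℕ → ℂ := fun n => (((n : ℝ) + a : ℝ) : ℂ) ^ (1 - s) with hf
  have hpartial : ∀ N : ℕ, (∑ n ∈ Finset.range N, e a n s)
      = (∑ n ∈ Finset.range N, (s - 1) * (((n : ℝ) + a : ℝ) : ℂ) ^ (-s)) + (f N - f 0) := by
    intro N
    rw [← Finset.sum_range_sub f N, ← Finset.sum_add_distrib]
    apply Finset.sum_congr rfl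
    intro n _
    have h2 : f (n + 1) = (((n : ℝ) + a + 1 : ℝ) : ℂ) ^ (1 - s) := by
      simp only [hf]
      have hc : ((n + 1 : ℕ) : ℝ) + a = (n : ℝ) + a + 1 := by push_cast; ring
      rw [hc]
    have h3 : f n = (((n : ℝ) + a : ℝ) : ℂ) ^ (1 - s) := by simp only [hf]
    rw [e, h2, h3]
  have hftend : Tendsto (fun N : ℕ => f N) atTop (nhds 0) := by
    rw [tendsto_zero_iff_norm_tendsto_zero]
    have hnorm : ∀ N : ℕ, ‖f N‖ = ((N : ℝ) + a) ^ (1 - s.re) := by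
      intro N
      rw [hf, norm_cpow_eq_rpow_re_of_pos (by positivity),
        Complex.sub_re, Complex.one_re]
    simp_rw [hnorm]
    have h1 : Tendsto (fun N : ℕ => ((N : ℝ) + a)) atTop atTop :=
      tendsto_atTop_add_const_right atTop a tendsto_natCast_atTop_atTop
    have h2 : Tendsto (fun y : ℝ => y ^ (-(s.re - 1))) atTop (nhds 0) :=
      tendsto_rpow_neg_atTop (by linarith)
    have := h2.comp h1
    simpa [neg_sub, Function.comp_def] using this
  have hT1 : Tendsto (fun N => ∑ n ∈ Finset.range N, e a n s) atTop
      (nhds ((s - 1) * hurwitzZeta (a : UnitAddCircle) s + (0 - f 0))) := by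
    simp_rw [hpartial]
    exact hsum1.tendsto_sum_nat.add (hftend.sub_const (f 0))
  have hT2 : Tendsto (fun N => ∑ n ∈ Finset.range N, e a n s) atTop (nhds (∑' n, e a n s)) :=
    he.hasSum.tendsto_sum_nat
  have := tendsto_nhds_unique hT2 hT1
  have hf0 : f 0 = ((a : ℝ) : ℂ) ^ (1 - s) := by rw [hf]; norm_num
  rw [hf0] at this
  rw [this]
  ring

lemma e_differentiable {a : ℝ} (ha : 0 < a) (n : ℕ) :
    Differentiable ℂ (fun s => e a n s) := by
  have h1 : (((n : ℝ) + a : ℝ) : ℂ) ≠ 0 := by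
    rw [Complex.ofReal_ne_zero]
    positivity
  have h2 : (((n : ℝ) + a + 1 : ℝ) : ℂ) ≠ 0 := by
    rw [Complex.ofReal_ne_zero]
    positivity
  apply Differentiable.add
  · exact (differentiable_id.sub_const 1).mul
      (Differentiable.const_cpow differentiable_id.neg (Or.inl h1))
  · exact (Differentiable.const_cpow ((differentiable_const 1).sub differentiable_id)
      (Or.inl h2)).sub
      (Differentiable.const_cpow ((differentiable_const 1).sub differentiable_id) (Or.inl h1))

open HurwitzZeta in
lemma key_strip {a : ℝ} (ha : 1/2 ≤ a) (ha' : a ≤ 1) {σ : ℝ} (hσ : 0 < σ) (hσ' : σ < 1) :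
    ((σ : ℂ) - 1) * hurwitzZeta (a : UnitAddCircle) (σ : ℂ)
      = ((a : ℝ) : ℂ) ^ (1 - (σ : ℂ)) + ∑' n, e a n (σ : ℂ) := by
  have ha0 : (0:ℝ) < a := by linarith
  set U : Set ℂ := {s : ℂ | σ/2 < s.re} ∩ Metric.ball 0 (σ + 4) with hU
  have hUopen : IsOpen U :=
    (isOpen_lt continuous_const Complex.continuous_re).inter Metric.isOpen_ball
  have hUconv : Convex ℝ U := (convex_halfSpace_re_gt _).inter (convex_ball _ _)
  set F : ℂ → ℂ := fun s =>
    (s - 1) * (hurwitzZeta (a : UnitAddCircle) s - 1 / (s - 1) / Complex.Gammaℝ s)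
      + (Complex.Gammaℝ s)⁻¹ with hF
  set G : ℂ → ℂ := fun s => ((a : ℝ) : ℂ) ^ (1 - s) + ∑' n, e a n s with hG
  have hFeq : ∀ s : ℂ, s ≠ 1 → Complex.Gammaℝ s ≠ 0 →
      F s = (s - 1) * hurwitzZeta (a : UnitAddCircle) s := by
    intro s hs hg
    have hs1 : s - 1 ≠ 0 := sub_ne_zero.mpr hs
    simp only [hF]
    field_simp
    ring
  have hFdiff : DifferentiableOn ℂ F U := by
    intro s hsU
    have hre : 0 < s.re := lt_trans (half_pos hσ) hsU.1
    apply DifferentiableAt.differentiableWithinAt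
    have hginv : DifferentiableAt ℂ (fun s => (Complex.Gammaℝ s)⁻¹) s :=
      Complex.differentiable_Gammaℝ_inv.differentiableAt
    have hinner : DifferentiableAt ℂ
        (fun s => hurwitzZeta (a : UnitAddCircle) s - 1 / (s - 1) / Complex.Gammaℝ s) s := by
      rcases eq_or_ne s 1 with rfl | hs1
      · exact differentiableAt_hurwitzZeta_sub_one_div (a : UnitAddCircle)
      · apply (differentiableAt_hurwitzZeta (a : UnitAddCircle) hs1).sub
        have : (fun s : ℂ => 1 / (s - 1) / Complex.Gammaℝ s)
            = fun s : ℂ => 1 / (s - 1) * (Complex.Gammaℝ s)⁻¹ := by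
          funext t
          rw [div_eq_mul_inv]
        rw [this]
        apply DifferentiableAt.mul _ hginv
        exact (differentiable_const 1).differentiableAt.div
          (differentiableAt_id.sub_const 1) (sub_ne_zero.mpr hs1)
    exact ((differentiableAt_id.sub_const 1).mul hinner).add hginv
  set C : ℝ := (σ + 5) * (σ + 4) * (2:ℝ) ^ ((σ:ℝ) + 4) with hC
  have hCpos : 0 < C := by
    rw [hC]
    positivity
  have hGdiff : DifferentiableOn ℂ G U := by
    apply DifferentiableOn.add
    · apply Differentiable.differentiableOn
      apply Differentiable.const_cpow ((differentiable_const 1).sub differentiable_id)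
      exact Or.inl (by rw [Complex.ofReal_ne_zero]; positivity)
    · apply differentiableOn_tsum_of_summable_norm
        (u := fun n : ℕ => C * ((n : ℝ) + 1/2) ^ (-(σ/2) - 1))
        ((summable_u (half_pos hσ)).mul_left C)
        (fun n => (e_differentiable ha0 n).differentiableOn) hUopen
      intro n w hwU
      have hwre : σ/2 < w.re := hwU.1
      have hre : 0 < w.re := lt_trans (half_pos hσ) hwre
      have hwnorm : ‖w‖ < σ + 4 := by
        have := hwU.2
        rwa [Metric.mem_ball, dist_zero_right] at this
      have h1 : ‖w - 1‖ ≤ σ + 5 := by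
        calc ‖w - 1‖ ≤ ‖w‖ + ‖(1:ℂ)‖ := norm_sub_le w 1
          _ ≤ σ + 5 := by rw [norm_one]; linarith
      have h2 : ‖w‖ ≤ σ + 4 := hwnorm.le
      have h3 : ((n:ℝ) + 1/2) ^ (-w.re - 1)
          ≤ (2:ℝ) ^ ((σ:ℝ) + 4) * ((n:ℝ) + 1/2) ^ (-(σ/2) - 1) := by
        have hsplit : -w.re - 1 = (-(σ/2) - 1) + (σ/2 - w.re) := by ring
        rw [hsplit, Real.rpow_add (by positivity)]
        have hq : ((n:ℝ) + 1/2) ^ (σ/2 - w.re) ≤ (2:ℝ) ^ ((σ:ℝ) + 4) := by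
          calc ((n:ℝ) + 1/2) ^ (σ/2 - w.re) ≤ ((1:ℝ)/2) ^ (σ/2 - w.re) :=
              Real.rpow_le_rpow_of_nonpos (by norm_num) (by linarith [Nat.cast_nonneg (α := ℝ) n])
                (by linarith)
            _ = (2:ℝ) ^ (w.re - σ/2) := by
                rw [one_div, Real.inv_rpow (by norm_num), ← Real.rpow_neg (by norm_num)]
                ring_nf
            _ ≤ (2:ℝ) ^ ((σ:ℝ) + 4) := by
                apply Real.rpow_le_rpow_of_exponent_le one_le_two
                have : w.re ≤ ‖w‖ := Complex.re_le_norm w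
                linarith
        calc ((n:ℝ) + 1/2) ^ (-(σ/2) - 1) * ((n:ℝ) + 1/2) ^ (σ/2 - w.re)
            ≤ ((n:ℝ) + 1/2) ^ (-(σ/2) - 1) * (2:ℝ) ^ ((σ:ℝ) + 4) :=
              mul_le_mul_of_nonneg_left hq (by positivity)
          _ = (2:ℝ) ^ ((σ:ℝ) + 4) * ((n:ℝ) + 1/2) ^ (-(σ/2) - 1) := mul_comm _ _
      calc ‖e a n w‖ ≤ ‖w - 1‖ * ‖w‖ * ((n : ℝ) + 1/2) ^ (-w.re - 1) := norm_e_le ha hre n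
        _ ≤ (σ + 5) * (σ + 4) * ((2:ℝ) ^ ((σ:ℝ) + 4) * ((n : ℝ) + 1/2) ^ (-(σ/2) - 1)) := by
            apply mul_le_mul (mul_le_mul h1 h2 (norm_nonneg _) (by linarith)) h3
              (by positivity) (by positivity)
        _ = C * ((n : ℝ) + 1/2) ^ (-(σ/2) - 1) := by rw [hC]; ring
  have hAnF := hFdiff.analyticOnNhd hUopen
  have hAnG := hGdiff.analyticOnNhd hUopen
  have hmem2 : (2:ℂ) ∈ U := by
    constructor
    · simp only [Set.mem_setOf_eq]
      norm_num
      linarith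
    · rw [Metric.mem_ball, dist_zero_right]
      norm_num
      linarith
  have hfg : F =ᶠ[nhds (2:ℂ)] G := by
    have hopen2 : IsOpen {s : ℂ | 1 < s.re} := isOpen_lt continuous_const Complex.continuous_re
    filter_upwards [hopen2.mem_nhds (by norm_num : (2:ℂ) ∈ {s : ℂ | 1 < s.re})] with s hs
    have hs' : 1 < s.re := hs
    have hsne : s ≠ 1 := by
      intro h
      rw [h] at hs'
      norm_num at hs'
    rw [hFeq s hsne (Complex.Gammaℝ_ne_zero_of_re_pos (by linarith)), hG]
    exact key_gt_one ha ha' hs'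
  have heq := hAnF.eqOn_of_preconnected_of_eventuallyEq hAnG hUconv.isPreconnected hmem2 hfg
  have hσU : ((σ:ℝ) : ℂ) ∈ U := by
    constructor
    · simp only [Set.mem_setOf_eq, Complex.ofReal_re]
      linarith
    · rw [Metric.mem_ball, dist_zero_right, Complex.norm_real, Real.norm_eq_abs,
        abs_of_pos hσ]
      linarith
  have := heq hσU
  rw [hFeq ((σ:ℝ) : ℂ) (by exact_mod_cast hσ'.ne)
    (Complex.Gammaℝ_ne_zero_of_re_pos (by simpa using hσ))] at this
  rw [this, hG]




/-- AM-GM style strict convexity point inequality for `t ^ (-σ)`. -/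
lemma point_lt {σ x u : ℝ} (hσ : 0 < σ) (hu : 0 < u) (hux : u < x) :
    2 * x ^ (-σ) < (x - u) ^ (-σ) + (x + u) ^ (-σ) := by
  have hxu : (0:ℝ) < x - u := by linarith
  have hxu' : (0:ℝ) < x + u := by linarith
  set P := (x - u) ^ (-σ/2) with hP
  set Q := (x + u) ^ (-σ/2) with hQ
  have hA : (x - u) ^ (-σ) = P ^ 2 := by
    rw [hP, ← Real.rpow_natCast ((x - u) ^ (-σ/2)) 2, ← Real.rpow_mul hxu.le]
    norm_num
  have hB : (x + u) ^ (-σ) = Q ^ 2 := by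
    rw [hQ, ← Real.rpow_natCast ((x + u) ^ (-σ/2)) 2, ← Real.rpow_mul hxu'.le]
    norm_num
  have hPQ : P * Q = ((x - u) * (x + u)) ^ (-σ/2) := (Real.mul_rpow hxu.le hxu'.le).symm
  have hlt : (x * x) ^ (-σ/2) < ((x - u) * (x + u)) ^ (-σ/2) := by
    apply Real.rpow_lt_rpow_of_neg (by positivity) (by nlinarith) (by linarith)
  have hxx : (x * x) ^ (-σ/2) = x ^ (-σ) := by
    rw [show x * x = x ^ (2:ℝ) by rw [show (2:ℝ) = ((2:ℕ):ℝ) by norm_num, Real.rpow_natCast]; ring,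
      ← Real.rpow_mul (by linarith : (0:ℝ) ≤ x)]
    congr 1
    ring
  have hsq : 0 ≤ (P - Q) ^ 2 := sq_nonneg _
  nlinarith [hPQ, hlt, hxx]

lemma intInt {σ : ℝ} (hσ' : σ < 1) (c d : ℝ) :
    IntervalIntegrable (fun t : ℝ => t ^ (-σ)) MeasureTheory.volume c d :=
  intervalIntegral.intervalIntegrable_rpow' (by linarith)

/-- Strict midpoint inequality. -/
lemma midpoint_lt {σ x : ℝ} (hσ : 0 < σ) (hσ' : σ < 1) (hx : 1/2 ≤ x) :
    x ^ (-σ) < ∫ t in (x - 1/2)..(x + 1/2), t ^ (-σ) := by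
  have hI1 : (∫ u in (0:ℝ)..(1/2), (x - u) ^ (-σ)) = ∫ t in (x - 1/2)..x, t ^ (-σ) := by
    rw [intervalIntegral.integral_comp_sub_left (fun t => t ^ (-σ)) x]
    norm_num
  have hI2 : (∫ u in (0:ℝ)..(1/2), (x + u) ^ (-σ)) = ∫ t in x..(x + 1/2), t ^ (-σ) := by
    rw [intervalIntegral.integral_comp_add_left (fun t => t ^ (-σ)) x]
    norm_num
  have hii1 : IntervalIntegrable (fun u : ℝ => (x - u) ^ (-σ)) MeasureTheory.volume 0 (1/2) := by
    have := (intInt hσ' x (x - 1/2)).comp_sub_left x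
    simpa using this
  have hii2 : IntervalIntegrable (fun u : ℝ => (x + u) ^ (-σ)) MeasureTheory.volume 0 (1/2) := by
    have := (intInt hσ' x (x + 1/2)).comp_add_left x
    simpa using this
  have hii3 : IntervalIntegrable (fun _ : ℝ => 2 * x ^ (-σ)) MeasureTheory.volume 0 (1/2) :=
    intervalIntegrable_const
  have hpos : 0 < ∫ u in (0:ℝ)..(1/2), ((x - u) ^ (-σ) + (x + u) ^ (-σ) - 2 * x ^ (-σ)) := by
    apply intervalIntegral.intervalIntegral_pos_of_pos_on ((hii1.add hii2).sub hii3)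
    · intro u hu
      have := point_lt hσ hu.1 (lt_of_lt_of_le hu.2 hx)
      simpa using by linarith
    · norm_num
  have hsplit : (∫ t in (x - 1/2)..x, t ^ (-σ)) + (∫ t in x..(x + 1/2), t ^ (-σ))
      = ∫ t in (x - 1/2)..(x + 1/2), t ^ (-σ) :=
    intervalIntegral.integral_add_adjacent_intervals (intInt hσ' _ _) (intInt hσ' _ _)
  have hconst : (∫ _ in (0:ℝ)..(1/2), 2 * x ^ (-σ)) = x ^ (-σ) := by
    rw [intervalIntegral.integral_const, sub_zero, smul_eq_mul]
    ring
  rw [intervalIntegral.integral_sub (hii1.add hii2) hii3,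
      intervalIntegral.integral_add hii1 hii2, hI1, hI2, hconst, hsplit] at hpos
  linarith

lemma rtele {σ : ℝ} (hσ : 0 < σ) (hσ' : σ < 1) {x : ℝ} (hx : 0 < x) :
    (1 - σ) * ∫ t in x..(x + 1), t ^ (-σ) = (x + 1) ^ (1 - σ) - x ^ (1 - σ) := by
  rw [integral_rpow (Or.inl (by linarith : (-1:ℝ) < -σ))]
  have h1 : -σ + 1 = 1 - σ := by ring
  rw [h1, mul_div_cancel₀ _ (by linarith : 1 - σ ≠ 0)]

lemma rval {σ : ℝ} (hσ : 0 < σ) (hσ' : σ < 1) {x : ℝ} (hx : 0 ≤ x) :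
    ∫ t in (0:ℝ)..x, t ^ (-σ) = x ^ (1 - σ) / (1 - σ) := by
  rw [integral_rpow (Or.inl (by linarith : (-1:ℝ) < -σ))]
  have h1 : -σ + 1 = 1 - σ := by ring
  rw [h1, Real.zero_rpow (by linarith : 1 - σ ≠ 0), sub_zero]

lemma real_side {a σ : ℝ} (ha : 1/2 ≤ a) (ha' : a ≤ 1) (hσ : 0 < σ) (hσ' : σ < 1)
    (hsum : Summable (fun n : ℕ => (σ - 1) * ((n:ℝ) + a) ^ (-σ)
      + (((n:ℝ) + a + 1) ^ (1 - σ) - ((n:ℝ) + a) ^ (1 - σ)))) :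
    0 < a ^ (1 - σ) + ∑' n : ℕ, ((σ - 1) * ((n:ℝ) + a) ^ (-σ)
      + (((n:ℝ) + a + 1) ^ (1 - σ) - ((n:ℝ) + a) ^ (1 - σ))) := by
  have ha0 : (0:ℝ) < a := by linarith
  set g : ℕ → ℝ := fun n => ((n:ℝ) + a) ^ (-σ)
    - ∫ t in ((n:ℝ) + a)..((n:ℝ) + a + 1), t ^ (-σ) with hg
  set ψ : ℕ → ℝ := fun n => ∫ t in ((n:ℝ) + a - 1/2)..((n:ℝ) + a), t ^ (-σ) with hψ
  have heg : ∀ n : ℕ, (σ - 1) * ((n:ℝ) + a) ^ (-σ)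
      + (((n:ℝ) + a + 1) ^ (1 - σ) - ((n:ℝ) + a) ^ (1 - σ)) = (σ - 1) * g n := by
    intro n
    have h := rtele hσ hσ' (x := (n:ℝ) + a) (by positivity)
    simp only [hg]
    linear_combination -h
  have hgsum : Summable g := by
    have h2 : Summable (fun n : ℕ => ((σ - 1) * ((n:ℝ) + a) ^ (-σ)
        + (((n:ℝ) + a + 1) ^ (1 - σ) - ((n:ℝ) + a) ^ (1 - σ))) / (σ - 1)) :=
      hsum.div_const _
    apply h2.congr
    intro n
    rw [heg n, mul_div_cancel_left₀ _ (by linarith : σ - 1 ≠ 0)]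
  have hψnonneg : ∀ n : ℕ, 0 ≤ ψ n := by
    intro n
    apply intervalIntegral.integral_nonneg (by linarith)
    intro u hu
    have hu0 : (0:ℝ) ≤ u := by
      have h1 := hu.1
      have h2 := Nat.cast_nonneg (α := ℝ) n
      linarith
    exact Real.rpow_nonneg hu0 _
  have hstep : ∀ n : ℕ, g n < ψ n - ψ (n + 1) := by
    intro n
    have hx12 : 1/2 ≤ (n:ℝ) + a := by
      have := Nat.cast_nonneg (α := ℝ) n
      linarith
    have hψ1 : ψ (n + 1) = ∫ t in ((n:ℝ) + a + 1/2)..((n:ℝ) + a + 1), t ^ (-σ) := by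
      simp only [hψ]
      have e1 : ((n + 1 : ℕ):ℝ) + a - 1/2 = (n:ℝ) + a + 1/2 := by push_cast; ring
      have e2 : ((n + 1 : ℕ):ℝ) + a = (n:ℝ) + a + 1 := by push_cast; ring
      rw [e1, e2]
    have hadd1 : (∫ t in ((n:ℝ) + a - 1/2)..((n:ℝ) + a), t ^ (-σ))
        + (∫ t in ((n:ℝ) + a)..((n:ℝ) + a + 1/2), t ^ (-σ))
        = ∫ t in ((n:ℝ) + a - 1/2)..((n:ℝ) + a + 1/2), t ^ (-σ) :=
      intervalIntegral.integral_add_adjacent_intervals (intInt hσ' _ _) (intInt hσ' _ _)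
    have hadd2 : (∫ t in ((n:ℝ) + a)..((n:ℝ) + a + 1/2), t ^ (-σ))
        + (∫ t in ((n:ℝ) + a + 1/2)..((n:ℝ) + a + 1), t ^ (-σ))
        = ∫ t in ((n:ℝ) + a)..((n:ℝ) + a + 1), t ^ (-σ) :=
      intervalIntegral.integral_add_adjacent_intervals (intInt hσ' _ _) (intInt hσ' _ _)
    have hmid := midpoint_lt hσ hσ' hx12
    rw [hψ1]
    simp only [hg, hψ]
    linarith
  have htail : ∑' n : ℕ, g (n + 1) ≤ ψ 1 := by
    have hsumtail : Summable (fun n : ℕ => g (n + 1)) := (summable_nat_add_iff 1).mpr hgsum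
    apply Summable.tsum_le_of_sum_range_le hsumtail
    intro N
    have h1 : ∑ i ∈ Finset.range N, g (i + 1) ≤ ∑ i ∈ Finset.range N, (ψ (i + 1) - ψ (i + 2)) :=
      Finset.sum_le_sum (fun i _ => (hstep (i + 1)).le)
    have h2 : ∑ i ∈ Finset.range N, (ψ (i + 1) - ψ (i + 2)) = ψ 1 - ψ (N + 1) :=
      Finset.sum_range_sub' (fun i => ψ (i + 1)) N
    have h3 := hψnonneg (N + 1)
    linarith
  have hS : ∑' n, g n < ψ 0 := by
    rw [Summable.tsum_eq_zero_add hgsum]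
    have h0 := hstep 0
    linarith
  have hψ0 : ψ 0 ≤ a ^ (1 - σ) / (1 - σ) := by
    have hadd : (∫ t in (0:ℝ)..(a - 1/2), t ^ (-σ)) + (∫ t in (a - 1/2)..a, t ^ (-σ))
        = ∫ t in (0:ℝ)..a, t ^ (-σ) :=
      intervalIntegral.integral_add_adjacent_intervals (intInt hσ' _ _) (intInt hσ' _ _)
    have h0 : 0 ≤ ∫ t in (0:ℝ)..(a - 1/2), t ^ (-σ) := by
      apply intervalIntegral.integral_nonneg (by linarith)
      intro u hu
      exact Real.rpow_nonneg hu.1 _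
    have hval := rval hσ hσ' (le_of_lt ha0)
    have hψ0e : ψ 0 = ∫ t in (a - 1/2)..a, t ^ (-σ) := by
      simp only [hψ]
      norm_num
    linarith
  have htsum : ∑' n : ℕ, ((σ - 1) * ((n:ℝ) + a) ^ (-σ)
      + (((n:ℝ) + a + 1) ^ (1 - σ) - ((n:ℝ) + a) ^ (1 - σ))) = (σ - 1) * ∑' n, g n := by
    rw [← tsum_mul_left]
    exact tsum_congr heg
  rw [htsum]
  have hS2 : (σ - 1) * ψ 0 < (σ - 1) * ∑' n, g n := mul_lt_mul_of_neg_left hS (by linarith)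
  have hS3 : (σ - 1) * (a ^ (1 - σ) / (1 - σ)) ≤ (σ - 1) * ψ 0 :=
    mul_le_mul_of_nonpos_left hψ0 (by linarith)
  have hfin : (σ - 1) * (a ^ (1 - σ) / (1 - σ)) = -(a ^ (1 - σ)) := by
    have h1σ : (1:ℝ) - σ ≠ 0 := by linarith
    field_simp
    ring
  have hapos : 0 < a ^ (1 - σ) := Real.rpow_pos_of_pos ha0 _
  linarith

end HZNeg

open HurwitzZeta

theorem hurwitzZeta_neg_on_unit_interval (a : ℝ) (ha : 1 / 2 ≤ a) (ha' : a ≤ 1) :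
    ∀ σ : ℝ, 0 < σ → σ < 1 →
      (hurwitzZeta (a : UnitAddCircle) (σ : ℂ)).im = 0 ∧
      (hurwitzZeta (a : UnitAddCircle) (σ : ℂ)).re < 0 := by
  intro σ hσ hσ'
  have ha0 : (0:ℝ) < a := by linarith
  have key := HZNeg.key_strip ha ha' hσ hσ'
  have hcast : ∀ n : ℕ, (((σ - 1) * ((n:ℝ) + a) ^ (-σ)
      + (((n:ℝ) + a + 1) ^ (1 - σ) - ((n:ℝ) + a) ^ (1 - σ)) : ℝ) : ℂ) = HZNeg.e a n (σ:ℂ) := by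
    intro n
    rw [HZNeg.e]
    push_cast
    rw [Complex.ofReal_cpow (by positivity : (0:ℝ) ≤ (n:ℝ) + a) (-σ),
        Complex.ofReal_cpow (by positivity : (0:ℝ) ≤ (n:ℝ) + a + 1) (1 - σ),
        Complex.ofReal_cpow (by positivity : (0:ℝ) ≤ (n:ℝ) + a) (1 - σ)]
    push_cast
    ring
  have hsumE : Summable (fun n => HZNeg.e a n (σ:ℂ)) :=
    HZNeg.summable_e ha (by simpa using hσ)
  have hsumR : Summable (fun n : ℕ => (σ - 1) * ((n:ℝ) + a) ^ (-σ)
      + (((n:ℝ) + a + 1) ^ (1 - σ) - ((n:ℝ) + a) ^ (1 - σ))) :=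
    (RCLike.summable_ofReal ℂ).mp (hsumE.congr fun n => (hcast n).symm)
  set T : ℝ := a ^ (1 - σ) + ∑' n : ℕ, ((σ - 1) * ((n:ℝ) + a) ^ (-σ)
    + (((n:ℝ) + a + 1) ^ (1 - σ) - ((n:ℝ) + a) ^ (1 - σ))) with hT
  have hTpos : 0 < T := by
    rw [hT]
    exact HZNeg.real_side ha ha' hσ hσ' hsumR
  have htsumc : ((∑' n : ℕ, ((σ - 1) * ((n:ℝ) + a) ^ (-σ)
      + (((n:ℝ) + a + 1) ^ (1 - σ) - ((n:ℝ) + a) ^ (1 - σ))) : ℝ) : ℂ)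
      = ∑' n : ℕ, HZNeg.e a n (σ:ℂ) := by
    rw [← tsum_congr hcast]
    exact Complex.ofRealCLM.map_tsum hsumR
  have hkey2 : (((σ - 1 : ℝ)) : ℂ) * hurwitzZeta (a : UnitAddCircle) (σ:ℂ) = ((T : ℝ) : ℂ) := by
    rw [Complex.ofReal_sub, Complex.ofReal_one, key, hT, Complex.ofReal_add, htsumc]
    congr 1
    rw [Complex.ofReal_cpow ha0.le (1 - σ), Complex.ofReal_sub, Complex.ofReal_one]
  have hζ : hurwitzZeta (a : UnitAddCircle) (σ:ℂ) = ((T / (σ - 1) : ℝ) : ℂ) := by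
    rw [Complex.ofReal_div,
      eq_div_iff (Complex.ofReal_ne_zero.mpr (by linarith : σ - 1 ≠ 0)), mul_comm]
    exact hkey2
  rw [hζ]
  constructor
  · exact Complex.ofReal_im _
  · rw [Complex.ofReal_re]
    exact div_neg_of_pos_of_neg hTpos (by linarith)
end

section
/- Let 0 < a ≤ 1 and let z ∈ ℂ satisfy 0 < |z| ≤ 1 and z ≠ 1. Then Φ(σ,a,z) ≠ 0 for every real σ > 0. -/
open Set MeasureTheory

theorem hurwitzLerch_ne_zero (a : ℝ) (ha : 0 < a) (ha' : a ≤ 1)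
    (z : ℂ) (hz0 : 0 < ‖z‖) (hz1 : ‖z‖ ≤ 1) (hz : z ≠ 1)
    (σ : ℝ) (hσ : 0 < σ) :
    (1 / (Real.Gamma σ : ℂ)) *
      ∫ x in Ioi (0 : ℝ),
        ((x ^ (σ - 1) * Real.exp ((1 - a) * x) : ℝ) : ℂ) / ((Real.exp x : ℂ) - z) ≠ 0 := by
  -- z.re < 1
  have hzre_le : z.re ≤ ‖z‖ := Complex.re_le_norm z
  have hzre_lt : z.re < 1 := by
    rcases lt_or_eq_of_le (le_trans hzre_le hz1) with h | h
    · exact h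
    · exfalso; apply hz
      have h2 : ‖z‖ ^ 2 ≤ 1 := by nlinarith
      rw [Complex.sq_norm, Complex.normSq_apply] at h2
      have him : z.im = 0 := by nlinarith
      exact Complex.ext h (by simp [him])
  set δ : ℝ := 1 - z.re with hδdef
  have hδ0 : 0 < δ := by simp only [hδdef]; linarith
  set f : ℝ → ℂ := fun x =>
    ((x ^ (σ - 1) * Real.exp ((1 - a) * x) : ℝ) : ℂ) / ((Real.exp x : ℂ) - z) with hf
  -- denominator facts
  have hwre : ∀ x : ℝ, 0 < x → 0 < ((Real.exp x : ℂ) - z).re := by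
    intro x hx
    have h1 : 1 < Real.exp x := by have := Real.add_one_le_exp x; linarith
    simp only [Complex.sub_re, Complex.ofReal_re]
    linarith
  have hwne : ∀ x : ℝ, 0 < x → ((Real.exp x : ℂ) - z) ≠ 0 := by
    intro x hx h
    have := hwre x hx
    rw [h] at this
    simp at this
  have habsw : ∀ x : ℝ, 0 < x → Real.exp x - 1 + δ ≤ ‖((Real.exp x : ℂ) - z)‖ := by
    intro x hx
    have h1 : ((Real.exp x : ℂ) - z).re ≤ ‖((Real.exp x : ℂ) - z)‖ :=
      Complex.re_le_norm _
    simp only [Complex.sub_re, Complex.ofReal_re] at h1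
    simp only [hδdef]
    linarith
  -- key bound: exp x ≤ C * abs (exp x - z)
  set C : ℝ := 2 + 2 / δ with hC
  have hC0 : 0 < C := by rw [hC]; positivity
  have hkey : ∀ x : ℝ, 0 < x → Real.exp x ≤ C * ‖((Real.exp x : ℂ) - z)‖ := by
    intro x hx
    have h1 := habsw x hx
    have hE : 1 ≤ Real.exp x := Real.one_le_exp hx.le
    have h2 : Real.exp x ≤ C * (Real.exp x - 1 + δ) := by
      rw [hC]
      have h3 : 0 ≤ (2 / δ) * (Real.exp x - 1) := mul_nonneg (by positivity) (by linarith)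
      have h4 : (2 / δ) * δ = 2 := by field_simp
      nlinarith
    calc Real.exp x ≤ C * (Real.exp x - 1 + δ) := h2
      _ ≤ C * ‖((Real.exp x : ℂ) - z)‖ := by
          apply mul_le_mul_of_nonneg_left h1 hC0.le
  -- integrability
  have hcont : ContinuousOn f (Ioi 0) := by
    apply ContinuousOn.div
    · apply Complex.continuous_ofReal.comp_continuousOn
      apply ContinuousOn.mul
      · exact ContinuousOn.rpow_const continuousOn_id fun x hx => Or.inl (ne_of_gt hx)
      · exact (Real.continuous_exp.comp (continuous_const.mul continuous_id)).continuousOn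
    · exact ((Complex.continuous_ofReal.comp Real.continuous_exp).sub
        continuous_const).continuousOn
    · exact fun x hx => hwne x hx
  have hg : IntegrableOn (fun x : ℝ => C * (x ^ (σ - 1) * Real.exp (-a * x))) (Ioi 0) := by
    have := integrableOn_rpow_mul_exp_neg_mul_rpow (p := 1) (s := σ - 1) (b := a)
      (by linarith) one_pos ha
    simp only [Real.rpow_one] at this
    exact this.const_mul C
  have hbound : ∀ x ∈ Ioi (0 : ℝ), ‖f x‖ ≤ C * (x ^ (σ - 1) * Real.exp (-a * x)) := by
    intro x hx
    rw [mem_Ioi] at hx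
    have hxp : 0 < x ^ (σ - 1) := Real.rpow_pos_of_pos hx _
    have habs0 : 0 < ‖((Real.exp x : ℂ) - z)‖ := by
      have := habsw x hx
      have hE : 1 ≤ Real.exp x := Real.one_le_exp hx.le
      linarith
    have hnorm : ‖f x‖ = x ^ (σ - 1) * Real.exp ((1 - a) * x)
        / ‖((Real.exp x : ℂ) - z)‖ := by
      rw [hf]
      simp only [norm_div, Complex.norm_real, Real.norm_eq_abs]
      rw [_root_.abs_of_nonneg (by positivity)]
    rw [hnorm, div_le_iff₀ habs0]
    have hexp : Real.exp ((1 - a) * x) = Real.exp (-a * x) * Real.exp x := by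
      rw [← Real.exp_add]; ring_nf
    rw [hexp]
    have := mul_le_mul_of_nonneg_left (hkey x hx)
      (by positivity : 0 ≤ x ^ (σ - 1) * Real.exp (-a * x))
    calc x ^ (σ - 1) * (Real.exp (-a * x) * Real.exp x)
        = x ^ (σ - 1) * Real.exp (-a * x) * Real.exp x := by ring
      _ ≤ x ^ (σ - 1) * Real.exp (-a * x) * (C * ‖((Real.exp x : ℂ) - z)‖) := this
      _ = C * (x ^ (σ - 1) * Real.exp (-a * x)) * ‖((Real.exp x : ℂ) - z)‖ := by ring
  have hint : IntegrableOn f (Ioi 0) := by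
    apply Integrable.mono' hg (hcont.aestronglyMeasurable measurableSet_Ioi)
    exact (ae_restrict_iff' measurableSet_Ioi).mpr (Filter.Eventually.of_forall hbound)
  -- the real part of the integrand is positive
  have hre_pos : ∀ x ∈ Ioi (0 : ℝ), 0 < (f x).re := by
    intro x hx
    rw [mem_Ioi] at hx
    have hw := hwre x hx
    have hwn := hwne x hx
    rw [hf]
    simp only [Complex.div_re, Complex.ofReal_re, Complex.ofReal_im, zero_mul, zero_div,
      add_zero]
    have hnsq : 0 < Complex.normSq ((Real.exp x : ℂ) - z) := Complex.normSq_pos.mpr hwn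
    have hnum : 0 < x ^ (σ - 1) * Real.exp ((1 - a) * x) := by positivity
    positivity
  -- the integral has positive real part
  have hpos : 0 < (∫ x in Ioi (0 : ℝ), f x).re := by
    rw [show (∫ x in Ioi (0:ℝ), f x).re = RCLike.re (∫ x in Ioi (0:ℝ), f x) from rfl,
      ← integral_re hint]
    simp only [RCLike.re_to_complex]
    rw [setIntegral_pos_iff_support_of_nonneg_ae]
    · have hsub : Ioi (0:ℝ) ⊆ (Function.support fun x => (f x).re) ∩ Ioi 0 :=
        fun x hx => ⟨ne_of_gt (hre_pos x hx), hx⟩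
      calc (0:ENNReal) < volume (Ioi (0:ℝ)) := by simp [Real.volume_Ioi]
        _ ≤ _ := measure_mono hsub
    · exact (ae_restrict_iff' measurableSet_Ioi).mpr
        (Filter.Eventually.of_forall fun x hx => (hre_pos x hx).le)
    · exact hint.re
  apply mul_ne_zero
  · rw [one_div, ne_eq, inv_eq_zero, Complex.ofReal_eq_zero]
    exact (Real.Gamma_pos_of_pos hσ).ne'
  · intro h
    rw [show (∫ x in Ioi (0 : ℝ),
        ((x ^ (σ - 1) * Real.exp ((1 - a) * x) : ℝ) : ℂ) / ((Real.exp x : ℂ) - z))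
        = ∫ x in Ioi (0 : ℝ), f x from rfl] at h
    rw [h] at hpos
    simp at hpos
end

section
/- Let 0 < a ≤ 1 and let z ∈ ℂ with 0 < |z| ≤ 1 and Im(z) ≠ 0. Then Im(Φ(σ,a,z)) ≠ 0 for every real σ > 0; more precisely, Im(Φ(σ,a,z)) has the same sign as Im(z). -/
open Set MeasureTheory

theorem hurwitzLerch_im_ne_zero (a : ℝ) (ha : 0 < a) (ha' : a ≤ 1)
    (z : ℂ) (hz0 : 0 < ‖z‖) (hz1 : ‖z‖ ≤ 1) (hzim : z.im ≠ 0)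
    (σ : ℝ) (hσ : 0 < σ) :
    ((1 / (Real.Gamma σ : ℂ)) *
        ∫ x in Ioi (0 : ℝ),
          ((x ^ (σ - 1) * Real.exp ((1 - a) * x) : ℝ) : ℂ) / ((Real.exp x : ℂ) - z)).im ≠ 0 ∧
    ((0 < z.im → 0 < ((1 / (Real.Gamma σ : ℂ)) *
        ∫ x in Ioi (0 : ℝ),
          ((x ^ (σ - 1) * Real.exp ((1 - a) * x) : ℝ) : ℂ) / ((Real.exp x : ℂ) - z)).im) ∧
     (z.im < 0 → ((1 / (Real.Gamma σ : ℂ)) *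
        ∫ x in Ioi (0 : ℝ),
          ((x ^ (σ - 1) * Real.exp ((1 - a) * x) : ℝ) : ℂ) / ((Real.exp x : ℂ) - z)).im < 0)) := by
  set g : ℝ → ℂ := fun x =>
    ((x ^ (σ - 1) * Real.exp ((1 - a) * x) : ℝ) : ℂ) / ((Real.exp x : ℂ) - z) with hgdef
  have hw : ∀ x : ℝ, ((Real.exp x : ℂ) - z) ≠ 0 := by
    intro x h
    apply hzim
    have := congrArg Complex.im h
    simpa using this
  have him : ∀ x : ℝ, |z.im| ≤ ‖(Real.exp x : ℂ) - z‖ := by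
    intro x
    have h1 : ((Real.exp x : ℂ) - z).im = -z.im := by simp
    calc |z.im| = |((Real.exp x : ℂ) - z).im| := by rw [h1, abs_neg]
      _ ≤ _ := Complex.abs_im_le_norm _
  have he1 : (1 : ℝ) < Real.exp 1 := by
    have := Real.exp_one_gt_d9; linarith
  set ε : ℝ := min (|z.im| / Real.exp 1) (1 - (Real.exp 1)⁻¹) with hεdef
  have hεpos : 0 < ε := by
    apply lt_min
    · exact div_pos (abs_pos.mpr hzim) (Real.exp_pos 1)
    · have : (Real.exp 1)⁻¹ < 1 := by
        rw [inv_lt_one_iff₀]; right; exact he1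
      linarith
  have hlow : ∀ x ∈ Ioi (0 : ℝ), ε * Real.exp x ≤ ‖(Real.exp x : ℂ) - z‖ := by
    intro x hx
    rcases le_or_gt x 1 with hx1 | hx1
    · calc ε * Real.exp x ≤ (|z.im| / Real.exp 1) * Real.exp 1 := by
            apply mul_le_mul (min_le_left _ _) (Real.exp_le_exp.mpr hx1)
              (Real.exp_pos x).le (div_nonneg (abs_nonneg _) (Real.exp_pos 1).le)
        _ = |z.im| := by field_simp
        _ ≤ _ := him x
    · have h1 : ε * Real.exp x ≤ (1 - (Real.exp 1)⁻¹) * Real.exp x :=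
        mul_le_mul_of_nonneg_right (min_le_right _ _) (Real.exp_pos x).le
      have h2 : (1 - (Real.exp 1)⁻¹) * Real.exp x = Real.exp x - Real.exp (x - 1) := by
        rw [Real.exp_sub, div_eq_mul_inv]; ring
      have h3 : (1 : ℝ) ≤ Real.exp (x - 1) := Real.one_le_exp (by linarith)
      have h4 : Real.exp x - 1 ≤ ‖(Real.exp x : ℂ) - z‖ := by
        have habs : ‖((Real.exp x : ℂ))‖ = Real.exp x := by
          rw [Complex.norm_real, Real.norm_eq_abs, abs_of_pos (Real.exp_pos x)]
        calc Real.exp x - 1 ≤ ‖((Real.exp x : ℂ))‖ - ‖z‖ := by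
              rw [habs]; linarith
          _ ≤ |‖((Real.exp x : ℂ))‖ - ‖z‖| := le_abs_self _
          _ ≤ ‖(Real.exp x : ℂ) - z‖ := abs_norm_sub_norm_le _ _
      linarith
  have hbound_int : IntegrableOn (fun x => ε⁻¹ * (x ^ (σ - 1) * Real.exp (-a * x)))
      (Ioi (0 : ℝ)) := by
    have h := integrableOn_rpow_mul_exp_neg_mul_rpow (p := 1) (s := σ - 1) (b := a)
      (by linarith) zero_lt_one ha
    have h' : IntegrableOn (fun x => x ^ (σ - 1) * Real.exp (-a * x)) (Ioi (0 : ℝ)) := by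
      refine h.congr_fun (fun x _ => ?_) measurableSet_Ioi
      simp only [Real.rpow_one, pow_one]
    exact h'.const_mul _
  have hmeas : AEStronglyMeasurable g (volume.restrict (Ioi (0 : ℝ))) := by
    apply ContinuousOn.aestronglyMeasurable _ measurableSet_Ioi
    apply ContinuousOn.div
    · apply Continuous.comp_continuousOn Complex.continuous_ofReal
      apply ContinuousOn.mul
      · exact fun x hx => (Real.continuousAt_rpow_const x (σ - 1)
          (Or.inl (ne_of_gt hx))).continuousWithinAt
      · exact (Real.continuous_exp.comp (continuous_const.mul continuous_id)).continuousOn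
    · exact ((Complex.continuous_ofReal.comp Real.continuous_exp).sub
        continuous_const).continuousOn
    · exact fun x _ => hw x
  have hint : IntegrableOn g (Ioi (0 : ℝ)) := by
    refine Integrable.mono' hbound_int hmeas ?_
    refine (ae_restrict_iff' measurableSet_Ioi).2 (Filter.Eventually.of_forall fun x hx => ?_)
    have hc : 0 ≤ x ^ (σ - 1) * Real.exp ((1 - a) * x) :=
      mul_nonneg (Real.rpow_nonneg (le_of_lt hx) _) (Real.exp_pos _).le
    have hden : 0 < ε * Real.exp x := mul_pos hεpos (Real.exp_pos x)
    have hexp : Real.exp ((1 - a) * x) * (Real.exp x)⁻¹ = Real.exp (-a * x) := by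
      rw [← Real.exp_neg, ← Real.exp_add]; ring_nf
    calc ‖g x‖ = (x ^ (σ - 1) * Real.exp ((1 - a) * x)) /
          ‖(Real.exp x : ℂ) - z‖ := by
          rw [hgdef]
          simp only [norm_div]
          rw [Complex.norm_real, Real.norm_eq_abs, abs_of_nonneg hc]
      _ ≤ (x ^ (σ - 1) * Real.exp ((1 - a) * x)) / (ε * Real.exp x) := by
          gcongr
          exact hlow x hx
      _ = ε⁻¹ * (x ^ (σ - 1) * Real.exp (-a * x)) := by
          rw [← hexp]; field_simp; try ring
  -- imaginary part of the integrand
  set f : ℝ → ℝ := fun x => (x ^ (σ - 1) * Real.exp ((1 - a) * x)) /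
      Complex.normSq ((Real.exp x : ℂ) - z) with hfdef
  have hgim : ∀ x : ℝ, (g x).im = z.im * f x := by
    intro x
    rw [hgdef, hfdef]
    simp only [Complex.div_im, Complex.ofReal_im, Complex.ofReal_re, Complex.sub_im,
      Complex.sub_re, Complex.ofReal_im, Complex.ofReal_re]
    field_simp
    ring
  have hfint : IntegrableOn f (Ioi (0 : ℝ)) := by
    have h1 : Integrable (fun x => (g x).im) (volume.restrict (Ioi (0 : ℝ))) := hint.im
    have h2 : Integrable (fun x => z.im⁻¹ * (g x).im) (volume.restrict (Ioi (0 : ℝ))) :=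
      h1.const_mul _
    refine h2.congr (Filter.Eventually.of_forall fun x => ?_)
    show z.im⁻¹ * (g x).im = f x
    rw [hgim x]
    field_simp
  have hfpos : ∀ x ∈ Ioi (0 : ℝ), 0 < f x := by
    intro x hx
    apply div_pos
    · exact mul_pos (Real.rpow_pos_of_pos hx _) (Real.exp_pos _)
    · exact Complex.normSq_pos.mpr (hw x)
  have hJpos : 0 < ∫ x in Ioi (0 : ℝ), f x := by
    rw [setIntegral_pos_iff_support_of_nonneg_ae]
    · apply lt_of_lt_of_le _ (measure_mono (show Ioi (0:ℝ) ⊆ Function.support f ∩ Ioi 0 from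
        fun x hx => ⟨ne_of_gt (hfpos x hx), hx⟩))
      simp [Real.volume_Ioi]
    · exact (ae_restrict_iff' measurableSet_Ioi).2
        (Filter.Eventually.of_forall fun x hx => (hfpos x hx).le)
    · exact hfint
  -- compute the imaginary part of the whole expression
  have hIim : (∫ x in Ioi (0 : ℝ), g x).im = z.im * ∫ x in Ioi (0 : ℝ), f x := by
    have h0 := integral_im (𝕜 := ℂ) hint
    simp only [RCLike.im_to_complex] at h0
    rw [← h0]
    rw [← integral_const_mul]
    exact setIntegral_congr_fun measurableSet_Ioi fun x _ => hgim x
  have hGamma : 0 < Real.Gamma σ := Real.Gamma_pos_of_pos hσ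
  have hkey : ((1 / (Real.Gamma σ : ℂ)) * ∫ x in Ioi (0 : ℝ), g x).im =
      (Real.Gamma σ)⁻¹ * (z.im * ∫ x in Ioi (0 : ℝ), f x) := by
    rw [one_div, ← Complex.ofReal_inv, Complex.im_ofReal_mul, hIim]
  rw [hgdef] at hkey
  have hGi : 0 < (Real.Gamma σ)⁻¹ := inv_pos.mpr hGamma
  have hpos : 0 < z.im → 0 < (Real.Gamma σ)⁻¹ * (z.im * ∫ x in Ioi (0 : ℝ), f x) :=
    fun h => mul_pos hGi (mul_pos h hJpos)
  have hneg : z.im < 0 → (Real.Gamma σ)⁻¹ * (z.im * ∫ x in Ioi (0 : ℝ), f x) < 0 :=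
    fun h => mul_neg_of_pos_of_neg hGi (mul_neg_of_neg_of_pos h hJpos)
  refine ⟨?_, fun h => by rw [hkey]; exact hpos h, fun h => by rw [hkey]; exact hneg h⟩
  rw [hkey]
  rcases hzim.lt_or_gt with h | h
  · exact ne_of_lt (hneg h)
  · exact ne_of_gt (hpos h)
end

section
/- Let 0 < a ≤ 1 and define H(a,x) := e^{(1-a)x}/(e^x − 1) − 1/x for x > 0. Then H(a,x) < 0 for all x > 0 if and only if a ≥ 1/2. -/
/-- `H(a,x) = e^((1-a)x)/(e^x - 1) - 1/x`. -/
noncomputable def Hfun (a x : ℝ) : ℝ :=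
  Real.exp ((1 - a) * x) / (Real.exp x - 1) - 1 / x

theorem Hfun_neg_iff (a : ℝ) (ha : 0 < a) (ha' : a ≤ 1) :
    (∀ x : ℝ, 0 < x → Hfun a x < 0) ↔ 1 / 2 ≤ a := by
  constructor
  · intro h
    by_contra hlt
    push_neg at hlt
    have hεpos : 0 < 1 / 2 - a := by linarith
    set x := min 1 ((9 / 2) * (1 / 2 - a)) with hxdef
    have hx0 : 0 < x := lt_min one_pos (by positivity)
    have hx1 : x ≤ 1 := min_le_left _ _
    have hx2 : x ≤ (9 / 2) * (1 / 2 - a) := min_le_right _ _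
    have hexp1 : 1 + (1 - a) * x ≤ Real.exp ((1 - a) * x) := by
      have := Real.add_one_le_exp ((1 - a) * x); linarith
    have hexp2 : Real.exp x - (1 + x + x ^ 2 / 2) ≤ 2 / 9 * x ^ 3 := by
      have hb := Real.exp_bound (x := x) (by rw [abs_of_pos hx0]; exact hx1)
        (n := 3) (by norm_num)
      rw [abs_of_pos hx0] at hb
      simp [Finset.sum_range_succ, Nat.factorial] at hb
      have := abs_le.mp hb
      nlinarith [this.2]
    have hex : (0 : ℝ) < Real.exp x - 1 := by
      have := Real.add_one_lt_exp (x := x) (ne_of_gt hx0); linarith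
    have key : Real.exp x - 1 ≤ x * Real.exp ((1 - a) * x) := by
      nlinarith [sq_nonneg x, mul_le_mul_of_nonneg_right hx2 (le_of_lt (mul_pos hx0 hx0))]
    have hH := h x hx0
    unfold Hfun at hH
    rw [sub_neg, div_lt_div_iff₀ hex hx0] at hH
    nlinarith
  · intro ha2 x hx
    have h1 : Real.exp ((1 - a) * x) ≤ Real.exp (x / 2) :=
      Real.exp_le_exp.mpr (by nlinarith)
    have h2 : x / 2 < Real.sinh (x / 2) := (Real.self_lt_sinh_iff).mpr (by linarith)
    rw [Real.sinh_eq] at h2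
    have he : 0 < Real.exp (x / 2) := Real.exp_pos _
    have hmul : Real.exp (x / 2) * Real.exp (x / 2) = Real.exp x := by
      rw [← Real.exp_add]; ring_nf
    have hmul2 : Real.exp (-(x / 2)) * Real.exp (x / 2) = 1 := by
      rw [← Real.exp_add]; simp
    have h3 : x * Real.exp (x / 2) < Real.exp x - 1 := by nlinarith
    have hex : (0 : ℝ) < Real.exp x - 1 := by
      have := Real.add_one_lt_exp (x := x) (ne_of_gt hx); linarith
    unfold Hfun
    rw [sub_neg, div_lt_div_iff₀ hex hx]
    nlinarith [Real.exp_pos ((1 - a) * x)]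
end

section
/- Let 0 < a ≤ 1 and let s₁, s₂ ∈ ℂ with Re(s₁) > 0, Re(s₂) > 1 and Re(s₁ + s₂) > 2. Then the double series ∑_{0 ≤ n₁ < n₂} (n₁+a)^{-s₁} (n₂+a)^{-s₂} (equivalently, ∑_{m=0}^∞ (m+a)^{-s₁} ∑_{n=1}^∞ (m+n+a)^{-s₂}) converges absolutely, i.e. the family ((n₁+a)^{-s₁}(n₂+a)^{-s₂})_{0 ≤ n₁ < n₂} is summable. -/
theorem doubleZeta_summable (a : ℝ) (ha : 0 < a) (ha' : a ≤ 1)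
    (s₁ s₂ : ℂ) (h1 : 0 < s₁.re) (h2 : 1 < s₂.re) (h12 : 2 < (s₁ + s₂).re) :
    Summable (fun p : {q : ℕ × ℕ // q.1 < q.2} =>
      ((p.val.1 : ℂ) + a) ^ (-s₁) * ((p.val.2 : ℂ) + a) ^ (-s₂)) := by
  set σ₁ := s₁.re with hσ₁
  set σ₂ := s₂.re with hσ₂
  have h12' : 2 < σ₁ + σ₂ := by simpa using h12
  set t : ℝ := (max (1 - σ₁) 0 + (σ₂ - 1)) / 2 with ht
  have ht0 : 0 < t := by
    have := le_max_right (1 - σ₁) 0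
    have : (0:ℝ) ≤ max (1 - σ₁) 0 := this
    nlinarith
  have htlt : t < σ₂ - 1 := by
    have hmax : max (1 - σ₁) 0 < σ₂ - 1 := by
      apply max_lt <;> linarith
    nlinarith
  have hst : 1 < σ₁ + t := by
    have : 1 - σ₁ ≤ max (1 - σ₁) 0 := le_max_left _ _
    nlinarith
  set u : ℝ := σ₂ - t with hu
  have hu1 : 1 < u := by simp only [hu]; linarith
  -- equivalence ℕ × ℕ ≃ subtype
  let e : ℕ × ℕ ≃ {q : ℕ × ℕ // q.1 < q.2} :=
    { toFun := fun p => ⟨(p.1, p.1 + p.2 + 1), by omega⟩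
      invFun := fun q => (q.1.1, q.1.2 - q.1.1 - 1)
      left_inv := fun p => by ext <;> simp <;> omega
      right_inv := fun q => by
        ext
        · rfl
        · have := q.2; simp; omega }
  rw [← e.summable_iff]
  apply Summable.of_norm
  have hg : Summable (fun m : ℕ => ((m : ℝ) + a) ^ (-(σ₁ + t))) := by
    have := (Real.summable_one_div_nat_add_rpow a (σ₁ + t)).2 hst
    refine this.congr fun m => ?_
    rw [abs_of_pos (by positivity), Real.rpow_neg (by positivity), one_div]
  have hh : Summable (fun k : ℕ => ((k : ℝ) + 1) ^ (-u)) := by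
    have := (Real.summable_one_div_nat_add_rpow 1 u).2 hu1
    refine this.congr fun k => ?_
    rw [abs_of_pos (by positivity), Real.rpow_neg (by positivity), one_div]
  have hgh : Summable (fun p : ℕ × ℕ =>
      ((p.1 : ℝ) + a) ^ (-(σ₁ + t)) * ((p.2 : ℝ) + 1) ^ (-u)) :=
    hg.mul_of_nonneg hh (fun m => by positivity) (fun k => by positivity)
  refine hgh.of_nonneg_of_le (fun p => norm_nonneg _) fun p => ?_
  obtain ⟨m, k⟩ := p
  have hma : (0:ℝ) < (m:ℝ) + a := by positivity
  have hMa : (0:ℝ) < ((m + k + 1 : ℕ) : ℝ) + a := by positivity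
  have hnorm : ‖((((m, k).1 : ℕ) : ℂ) + a) ^ (-s₁) *
      ((((m, k).1 + (m, k).2 + 1 : ℕ) : ℂ) + a) ^ (-s₂)‖
      = ((m : ℝ) + a) ^ (-σ₁) * (((m + k + 1 : ℕ) : ℝ) + a) ^ (-σ₂) := by
    rw [norm_mul]
    congr 1
    · rw [show (((m:ℕ) : ℂ) + a) = (((m : ℝ) + a : ℝ) : ℂ) by push_cast; ring,
        Complex.norm_cpow_eq_rpow_re_of_pos hma]
      simp [hσ₁]
    · rw [show (((m + k + 1 : ℕ) : ℂ) + a) = ((((m + k + 1 : ℕ) : ℝ) + a : ℝ) : ℂ) by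
        push_cast; ring,
        Complex.norm_cpow_eq_rpow_re_of_pos hMa]
      simp [hσ₂]
  calc ‖_‖ = ((m : ℝ) + a) ^ (-σ₁) * (((m + k + 1 : ℕ) : ℝ) + a) ^ (-σ₂) := hnorm
    _ ≤ ((m : ℝ) + a) ^ (-(σ₁ + t)) * ((k : ℝ) + 1) ^ (-u) := by
        have hsplit : (((m + k + 1 : ℕ) : ℝ) + a) ^ (-σ₂)
            = (((m + k + 1 : ℕ) : ℝ) + a) ^ (-t) * (((m + k + 1 : ℕ) : ℝ) + a) ^ (-u) := by
          rw [← Real.rpow_add hMa]; congr 1; simp [hu]; ring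
        rw [hsplit, ← mul_assoc]
        have h1le : (((m + k + 1 : ℕ) : ℝ) + a) ^ (-t) ≤ ((m : ℝ) + a) ^ (-t) := by
          apply Real.rpow_le_rpow_of_nonpos hma _ (by linarith)
          have hk : (0:ℝ) ≤ (k:ℝ) := Nat.cast_nonneg k
          push_cast; linarith
        have h2le : (((m + k + 1 : ℕ) : ℝ) + a) ^ (-u) ≤ ((k : ℝ) + 1) ^ (-u) := by
          apply Real.rpow_le_rpow_of_nonpos (by positivity) _ (by linarith)
          have hm : (0:ℝ) ≤ (m:ℝ) := Nat.cast_nonneg m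
          push_cast; linarith
        have hcomb : ((m : ℝ) + a) ^ (-σ₁) * (((m + k + 1 : ℕ) : ℝ) + a) ^ (-t)
            ≤ ((m : ℝ) + a) ^ (-(σ₁ + t)) := by
          rw [show -(σ₁ + t) = -σ₁ + -t by ring, Real.rpow_add hma]
          exact mul_le_mul_of_nonneg_left h1le (by positivity)
        exact mul_le_mul hcomb h2le (by positivity) (by positivity)
end

section
/- Let 0 < a ≤ 1 and let s₁, s₂ ∈ ℂ with Re(s₁) > 0, Re(s₂) > 1 and Re(s₁ + s₂) > 2. Then Γ(s₁) Γ(s₂) ζ₂(s₁,s₂;a) = ∫_0^∞ (y^{s₂-1}/(e^y − 1)) ∫_0^∞ x^{s₁-1} e^{(1-a)(x+y)} / (e^{x+y} − 1) dx dy. -/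
open Set

open MeasureTheory Real Complex in
private lemma geomHasSum {c u : ℝ} (hu : 0 < u) :
    HasSum (fun m : ℕ => rexp (-(((m : ℝ) + c) * u))) (rexp ((1 - c) * u) / (rexp u - 1)) := by
  have hr1 : rexp (-u) < 1 := by
    rw [exp_lt_one_iff]; linarith
  have h := (hasSum_geometric_of_lt_one (exp_nonneg _) hr1).mul_left (rexp (-(c * u)))
  have heq : ∀ m : ℕ, rexp (-(((m : ℝ) + c) * u)) = rexp (-(c * u)) * rexp (-u) ^ m := by
    intro m
    rw [← Real.exp_nat_mul, ← Real.exp_add]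
    congr 1
    ring
  have hlim : rexp (-(c * u)) * (1 - rexp (-u))⁻¹ = rexp ((1 - c) * u) / (rexp u - 1) := by
    have h1 : rexp u - 1 ≠ 0 := ne_of_gt (by linarith [one_lt_exp_iff.mpr hu])
    have h2 : 1 - rexp (-u) ≠ 0 := ne_of_gt (by linarith)
    field_simp
    rw [mul_sub, mul_sub, mul_one, mul_one, ← Real.exp_add, sub_mul, one_mul, ← Real.exp_add]
    congr 2 <;> ring
  rw [← hlim]
  exact h.congr_fun heq

open MeasureTheory Real Complex in
private lemma summable_nat_add_rpow' {a t : ℝ} (ha : 0 < a) (ha' : a ≤ 1) (ht : 1 < t) :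
    Summable (fun m : ℕ => ((m : ℝ) + a) ^ (-t)) := by
  have hbase : Summable (fun m : ℕ => a ^ (-t) * ((m : ℝ) + 1) ^ (-t)) := by
    apply Summable.mul_left
    have h2 := (summable_nat_add_iff 1).mpr ((Real.summable_nat_rpow_inv (p := t)).mpr ht)
    refine h2.congr fun m => ?_
    rw [Real.rpow_neg (by positivity)]
    push_cast
    ring_nf
  refine Summable.of_nonneg_of_le (fun m => by positivity) (fun m => ?_) hbase
  rw [← Real.mul_rpow ha.le (by positivity)]
  apply Real.rpow_le_rpow_of_nonpos (by positivity) (by nlinarith) (by linarith)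

open MeasureTheory Real Complex in
private lemma crux {a σ₁ σ₂ : ℝ} (ha : 0 < a) (ha' : a ≤ 1) (h1 : 0 < σ₁) (h2 : 1 < σ₂)
    (h12 : 2 < σ₁ + σ₂) :
    Summable (fun mn : ℕ × ℕ =>
      ((mn.1 : ℝ) + a) ^ (-σ₁) * ((mn.1 : ℝ) + mn.2 + 1 + a) ^ (-σ₂)) := by
  have hσ₂0 : 0 < σ₂ := by linarith
  set θ : ℝ := (max ((1 - σ₁) / σ₂) 0 + (σ₂ - 1) / σ₂) / 2 with hθdef
  have hU : 0 < (σ₂ - 1) / σ₂ := div_pos (by linarith) hσ₂0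
  have hU1 : (σ₂ - 1) / σ₂ < 1 := (div_lt_one hσ₂0).mpr (by linarith)
  have hL : max ((1 - σ₁) / σ₂) 0 < (σ₂ - 1) / σ₂ :=
    max_lt ((div_lt_div_iff_of_pos_right hσ₂0).mpr (by linarith)) hU
  have hθ0 : 0 ≤ θ := by
    have := le_max_right ((1 - σ₁) / σ₂) 0
    rw [hθdef]; linarith
  have hθU : θ < (σ₂ - 1) / σ₂ := by rw [hθdef]; linarith
  have hθ1 : θ ≤ 1 := by linarith
  have hθL : (1 - σ₁) / σ₂ < θ := by
    have := le_max_left ((1 - σ₁) / σ₂) 0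
    rw [hθdef]; linarith
  have hE1 : 1 < σ₁ + θ * σ₂ := by
    have := (div_lt_iff₀ hσ₂0).mp hθL; linarith
  have hE2 : 1 < (1 - θ) * σ₂ := by
    have := (lt_div_iff₀ hσ₂0).mp hθU; nlinarith
  have hs1 : Summable (fun m : ℕ => ((m : ℝ) + a) ^ (-(σ₁ + θ * σ₂))) :=
    summable_nat_add_rpow' ha ha' hE1
  have hs2 : Summable (fun n : ℕ => ((n : ℝ) + 1) ^ (-((1 - θ) * σ₂))) :=
    summable_nat_add_rpow' one_pos le_rfl hE2
  have hmaj := hs1.mul_of_nonneg hs2 (fun m => by positivity) (fun n => by positivity)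
  refine Summable.of_nonneg_of_le (fun mn => by positivity) (fun mn => ?_) hmaj
  obtain ⟨m, n⟩ := mn
  dsimp only
  set x : ℝ := (m : ℝ) + a with hx
  set z : ℝ := (n : ℝ) + 1 with hz
  have hx0 : 0 < x := by positivity
  have hz0 : 0 < z := by positivity
  have hw0 : 0 < (m : ℝ) + n + 1 + a := by positivity
  have hxw : x ≤ (m : ℝ) + n + 1 + a := by
    rw [hx]; linarith [Nat.cast_nonneg (α := ℝ) n]
  have hzw : z ≤ (m : ℝ) + n + 1 + a := by
    rw [hz]; linarith [Nat.cast_nonneg (α := ℝ) m, ha.le]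
  have key : x ^ θ * z ^ (1 - θ) ≤ (m : ℝ) + n + 1 + a := by
    calc x ^ θ * z ^ (1 - θ)
        ≤ ((m : ℝ) + n + 1 + a) ^ θ * ((m : ℝ) + n + 1 + a) ^ (1 - θ) :=
          mul_le_mul (Real.rpow_le_rpow hx0.le hxw hθ0)
            (Real.rpow_le_rpow hz0.le hzw (by linarith))
            (Real.rpow_nonneg hz0.le _) (Real.rpow_nonneg hw0.le _)
      _ = (m : ℝ) + n + 1 + a := by
          rw [← Real.rpow_add hw0]; norm_num
  have step : ((m : ℝ) + n + 1 + a) ^ (-σ₂) ≤ x ^ (θ * (-σ₂)) * z ^ ((1 - θ) * (-σ₂)) := by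
    have := Real.rpow_le_rpow_of_nonpos (by positivity) key (by linarith : -σ₂ ≤ 0)
    rwa [Real.mul_rpow (Real.rpow_nonneg hx0.le _) (Real.rpow_nonneg hz0.le _),
      ← Real.rpow_mul hx0.le, ← Real.rpow_mul hz0.le] at this
  calc x ^ (-σ₁) * ((m : ℝ) + n + 1 + a) ^ (-σ₂)
      ≤ x ^ (-σ₁) * (x ^ (θ * (-σ₂)) * z ^ ((1 - θ) * (-σ₂))) :=
        mul_le_mul_of_nonneg_left step (Real.rpow_nonneg hx0.le _)
    _ = x ^ (-(σ₁ + θ * σ₂)) * z ^ (-((1 - θ) * σ₂)) := by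
        rw [← mul_assoc, ← Real.rpow_add hx0]
        congr 2 <;> ring

open MeasureTheory Real Complex in
private lemma innerStep {a : ℝ} (ha : 0 < a) {s₁ : ℂ} (h1 : 0 < s₁.re) {y : ℝ}
    (hy : 0 < y) :
    HasSum (fun m : ℕ => Complex.Gamma s₁ / (((m : ℝ) + a : ℝ) : ℂ) ^ s₁ *
        ((rexp (-(((m : ℝ) + a) * y)) : ℝ) : ℂ))
      (∫ x in Ioi (0 : ℝ), (x : ℂ) ^ (s₁ - 1) * (Real.exp ((1 - a) * (x + y)) : ℂ) /
        ((Real.exp (x + y) : ℂ) - 1)) := by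
  have H := hasSum_mellin (a := fun m : ℕ => ((rexp (-(((m : ℝ) + a) * y)) : ℝ) : ℂ))
      (p := fun m : ℕ => (m : ℝ) + a)
      (F := fun x : ℝ => ((rexp ((1 - a) * (x + y)) : ℝ) : ℂ) / (((rexp (x + y) : ℝ) : ℂ) - 1))
      (s := s₁) (fun m => Or.inr (by positivity)) h1 ?_ ?_
  · rw [mellin] at H
    simp only [smul_eq_mul] at H
    have hInt : (∫ x in Ioi (0 : ℝ), (x : ℂ) ^ (s₁ - 1) * (Real.exp ((1 - a) * (x + y)) : ℂ) /
        ((Real.exp (x + y) : ℂ) - 1)) = ∫ x in Ioi (0 : ℝ), (x : ℂ) ^ (s₁ - 1) *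
          (((rexp ((1 - a) * (x + y)) : ℝ) : ℂ) / (((rexp (x + y) : ℝ) : ℂ) - 1)) :=
      setIntegral_congr_fun measurableSet_Ioi fun x _ => by rw [mul_div_assoc]
    rw [hInt]
    exact H.congr_fun fun m => by rw [mul_div_right_comm]
  · -- hF
    intro t ht
    rw [mem_Ioi] at ht
    have hg := geomHasSum (c := a) (u := t + y) (by linarith)
    have hc := (Complex.hasSum_ofReal
      (f := fun m : ℕ => rexp (-(((m : ℝ) + a) * (t + y))))).mpr hg
    have hFt : ((rexp ((1 - a) * (t + y)) : ℝ) : ℂ) / (((rexp (t + y) : ℝ) : ℂ) - 1) =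
        ((rexp ((1 - a) * (t + y)) / (rexp (t + y) - 1) : ℝ) : ℂ) := by push_cast; ring
    rw [hFt]
    refine hc.congr_fun fun m => ?_
    rw [← Complex.ofReal_mul, ← Real.exp_add]
    congr 2
    ring
  · -- h_sum
    have hmaj : Summable (fun m : ℕ => rexp (-(((m : ℝ) + a) * y)) * (a ^ s₁.re)⁻¹) :=
      ((geomHasSum (c := a) hy).summable).mul_right _
    refine Summable.of_nonneg_of_le (fun m => by positivity) (fun m => ?_) hmaj
    rw [Complex.norm_real, Real.norm_eq_abs, Real.abs_exp, div_eq_mul_inv]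
    refine mul_le_mul_of_nonneg_left ?_ (exp_nonneg _)
    refine inv_anti₀ (by positivity) ?_
    exact Real.rpow_le_rpow ha.le (le_add_of_nonneg_left (Nat.cast_nonneg m)) h1.le

private def pairEquiv : ℕ × ℕ ≃ {q : ℕ × ℕ // q.1 < q.2} where
  toFun mn := ⟨(mn.1, mn.1 + mn.2 + 1), by omega⟩
  invFun p := (p.val.1, p.val.2 - p.val.1 - 1)
  left_inv mn := by
    obtain ⟨m, n⟩ := mn
    simp only [Prod.mk.injEq]
    exact ⟨trivial, by omega⟩
  right_inv p := by
    obtain ⟨⟨m, n⟩, h⟩ := p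
    apply Subtype.ext
    simp only [Prod.mk.injEq]
    exact ⟨trivial, by omega⟩

/-- The Hurwitz type Euler–Zagier double zeta series
`∑_{0 ≤ n₁ < n₂} (n₁+a)^(-s₁) (n₂+a)^(-s₂)`. -/
noncomputable def doubleZeta (a : ℝ) (s₁ s₂ : ℂ) : ℂ :=
  ∑' p : {q : ℕ × ℕ // q.1 < q.2},
    ((p.val.1 : ℂ) + a) ^ (-s₁) * ((p.val.2 : ℂ) + a) ^ (-s₂)

set_option maxHeartbeats 1000000 in
open MeasureTheory Real Complex in
theorem gamma_mul_doubleZeta_eq_integral (a : ℝ) (ha : 0 < a) (ha' : a ≤ 1)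
    (s₁ s₂ : ℂ) (h1 : 0 < s₁.re) (h2 : 1 < s₂.re) (h12 : 2 < (s₁ + s₂).re) :
    Complex.Gamma s₁ * Complex.Gamma s₂ * doubleZeta a s₁ s₂ =
      ∫ y in Ioi (0 : ℝ), (y : ℂ) ^ (s₂ - 1) / ((Real.exp y : ℂ) - 1) *
        ∫ x in Ioi (0 : ℝ),
          (x : ℂ) ^ (s₁ - 1) * (Real.exp ((1 - a) * (x + y)) : ℂ) /
            ((Real.exp (x + y) : ℂ) - 1) := by
  set I : ℝ → ℂ := fun y => ∫ x in Ioi (0 : ℝ),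
      (x : ℂ) ^ (s₁ - 1) * (Real.exp ((1 - a) * (x + y)) : ℂ) /
        ((Real.exp (x + y) : ℂ) - 1) with hIdef
  have Houter := hasSum_mellin
      (a := fun mn : ℕ × ℕ => Complex.Gamma s₁ / (((mn.1 : ℝ) + a : ℝ) : ℂ) ^ s₁)
      (p := fun mn : ℕ × ℕ => (mn.1 : ℝ) + mn.2 + 1 + a)
      (F := fun y : ℝ => (((rexp y : ℝ) : ℂ) - 1)⁻¹ * I y) (s := s₂)
      (fun mn => Or.inr (by positivity)) (by linarith) ?_ ?_
  · -- main assembly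
    have hRHS : mellin (fun y : ℝ => (((rexp y : ℝ) : ℂ) - 1)⁻¹ * I y) s₂ =
        ∫ y in Ioi (0 : ℝ), (y : ℂ) ^ (s₂ - 1) / ((Real.exp y : ℂ) - 1) * I y := by
      rw [mellin]
      refine setIntegral_congr_fun measurableSet_Ioi fun y _ => ?_
      rw [smul_eq_mul]
      ring
    have Hfinal : HasSum (fun mn : ℕ × ℕ => Complex.Gamma s₁ * Complex.Gamma s₂ *
        (((mn.1 : ℂ) + a) ^ (-s₁) * (((mn.1 + mn.2 + 1 : ℕ) : ℂ) + a) ^ (-s₂)))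
        (mellin (fun y : ℝ => (((rexp y : ℝ) : ℂ) - 1)⁻¹ * I y) s₂) := by
      refine Houter.congr_fun fun mn => ?_
      push_cast
      rw [Complex.cpow_neg, Complex.cpow_neg]
      ring
    rw [doubleZeta, ← Equiv.tsum_eq pairEquiv
      (fun p : {q : ℕ × ℕ // q.1 < q.2} =>
        ((p.val.1 : ℂ) + a) ^ (-s₁) * ((p.val.2 : ℂ) + a) ^ (-s₂)), ← tsum_mul_left]
    simp only [pairEquiv, Equiv.coe_fn_mk]
    rw [Hfinal.tsum_eq, hRHS]
  · -- hF
    intro y hy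
    rw [mem_Ioi] at hy
    have h1s := innerStep ha h1 hy
    have hgR := geomHasSum (c := 1) hy
    have hgC := (Complex.hasSum_ofReal
      (f := fun n : ℕ => rexp (-(((n : ℝ) + 1) * y)))).mpr hgR
    have hglim : ((rexp ((1 - 1) * y) / (rexp y - 1) : ℝ) : ℂ) = (((rexp y : ℝ) : ℂ) - 1)⁻¹ := by
      push_cast
      norm_num
    rw [hglim] at hgC
    have hsum := summable_mul_of_summable_norm (summable_norm_iff.mpr h1s.summable)
      (summable_norm_iff.mpr hgC.summable)
    have H := h1s.mul hgC hsum
    rw [mul_comm] at H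
    refine H.congr_fun fun mn => ?_
    rw [mul_assoc, ← Complex.ofReal_mul, ← Real.exp_add]
    congr 3
    ring
  · -- h_sum (crux)
    have h12' : 2 < s₁.re + s₂.re := by
      rwa [Complex.add_re] at h12
    refine ((crux ha ha' h1 h2 h12').mul_left ‖Complex.Gamma s₁‖).congr fun mn => ?_
    have hX : (0 : ℝ) < (mn.1 : ℝ) + a := by positivity
    rw [norm_div,
      Complex.norm_cpow_eq_rpow_re_of_pos hX, Real.rpow_neg hX.le,
      Real.rpow_neg (by positivity : (0 : ℝ) ≤ (mn.1 : ℝ) + mn.2 + 1 + a)]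
    ring
end

section
/- Let 0 < a ≤ 1, let z₁, z₂ ∈ ℂ with 0 < |z₁| ≤ 1 and 0 < |z₂| ≤ 1, and let s₁, s₂ ∈ ℂ with Re(s₁) > 1 and Re(s₂) > 1. Then Γ(s₁) Γ(s₂) Φ₂(s₁,s₂,a,z₁,z₂) = ∫_0^∞ (y^{s₂-1}/(e^y − z₂)) ∫_0^∞ x^{s₁-1} e^{(1-a)(x+y)} / (e^{x+y} − z₁) dx dy. -/
open Set

section Aux
open MeasureTheory Real Complex

lemma my_exp_sub_ne (w : ℂ) (hw : ‖w‖ ≤ 1) {t : ℝ} (ht : 0 < t) :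
    (Real.exp t : ℂ) - w ≠ 0 := by
  intro h
  have : w = (Real.exp t : ℂ) := by linear_combination -h
  rw [this, Complex.norm_real, Real.norm_eq_abs, abs_of_pos (Real.exp_pos t)] at hw
  linarith [Real.add_one_le_exp t]

lemma my_geo_hasSum (w : ℂ) (hw : ‖w‖ ≤ 1) (b : ℝ) {t : ℝ} (ht : 0 < t) :
    HasSum (fun k : ℕ ↦ w ^ k * (Real.exp (-((k + b) * t)) : ℂ))
      ((Real.exp ((1 - b) * t) : ℂ) / ((Real.exp t : ℂ) - w)) := by
  have hr : ‖w * (Real.exp (-t) : ℂ)‖ < 1 := by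
    rw [norm_mul, Complex.norm_real, Real.norm_eq_abs,
      abs_of_pos (Real.exp_pos _)]
    calc ‖w‖ * Real.exp (-t) ≤ 1 * Real.exp (-t) := by
          gcongr
      _ < 1 := by rw [one_mul]; exact Real.exp_lt_one_iff.mpr (by linarith)
  have h := (hasSum_geometric_of_norm_lt_one hr).mul_left ((Real.exp (-(b * t)) : ℂ))
  have e2 : (Real.exp (-t) : ℂ) * Real.exp t = 1 := by
    rw [← Complex.ofReal_mul, ← Real.exp_add]; simp
  have hfun : ∀ k : ℕ, (Real.exp (-(b * t)) : ℂ) * (w * (Real.exp (-t) : ℂ)) ^ k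
      = w ^ k * (Real.exp (-((k + b) * t)) : ℂ) := by
    intro k
    rw [mul_pow, ← Complex.ofReal_pow, ← Real.exp_nat_mul]
    rw [show w ^ k * ((Real.exp (-((k + b) * t)) : ℝ) : ℂ)
      = w ^ k * (Real.exp (-((k+b)*t)) : ℂ) from rfl]
    rw [mul_comm ((Real.exp (-(b*t)) : ℝ) : ℂ), mul_assoc, ← Complex.ofReal_mul, ← Real.exp_add]
    ring_nf
  simp_rw [hfun] at h
  convert h using 1
  · rfl
  have h2 := my_exp_sub_ne w hw ht
  have h3 : (1 : ℂ) - w * (Real.exp (-t) : ℂ) ≠ 0 := by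
    intro h0
    apply h2
    have := congrArg (· * (Real.exp t : ℂ)) h0
    simp only [sub_mul, zero_mul, one_mul, mul_assoc, e2, mul_one] at this
    linear_combination this
  have e1 : (Real.exp ((1 - b) * t) : ℂ) = Real.exp (-(b * t)) * Real.exp t := by
    rw [← Complex.ofReal_mul, ← Real.exp_add]; ring_nf
  rw [e1, eq_comm, inv_eq_one_div, mul_one_div, div_eq_div_iff h3 h2]
  linear_combination (Real.exp (-(b*t)) : ℂ) * w * e2

lemma my_aux_int {s b : ℝ} (hs : -1 < s) (hb : 0 < b) :
    IntegrableOn (fun y : ℝ ↦ y ^ s * Real.exp (-(b * y))) (Ioi 0) := by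
  have h := integrableOn_rpow_mul_exp_neg_mul_rpow hs one_pos hb
  refine h.congr_fun (fun x _ ↦ ?_) measurableSet_Ioi
  simp only [Real.rpow_one, neg_mul]

lemma my_stepA (a : ℝ) (ha : 0 < a) (z₂ : ℂ) (hz₂ : ‖z₂‖ ≤ 1)
    (s₂ : ℂ) (h2 : 1 < s₂.re) (c : ℝ) (hc : 0 ≤ c) :
    HasSum (fun n : ℕ ↦ Complex.Gamma s₂ * z₂ ^ n / (((n : ℝ) + (c + 1 + a) : ℝ) : ℂ) ^ s₂)
      (∫ y in Ioi (0:ℝ), (y : ℂ) ^ (s₂ - 1) *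
        ((Real.exp (-((c + a) * y)) : ℂ) / ((Real.exp y : ℂ) - z₂))) := by
  have h := hasSum_mellin (a := fun n : ℕ ↦ z₂ ^ n) (p := fun n : ℕ ↦ (n : ℝ) + (c + 1 + a))
    (F := fun y ↦ (Real.exp (-((c + a) * y)) : ℂ) / ((Real.exp y : ℂ) - z₂)) (s := s₂)
    (fun n ↦ Or.inr (by positivity)) (by linarith) ?_ ?_
  · simpa [mellin, smul_eq_mul] using h
  · intro t ht
    have hgeo := my_geo_hasSum z₂ hz₂ (c + 1 + a) ht
    have e1 : (1 - (c + 1 + a)) * t = -((c + a) * t) := by ring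
    rw [e1] at hgeo
    simpa only [neg_mul] using hgeo
  · apply Summable.of_nonneg_of_le (fun n ↦ by positivity) (fun n ↦ ?_)
      ((Real.summable_one_div_nat_add_rpow (c + 1 + a) s₂.re).mpr h2)
    rw [abs_of_pos (by positivity : (0:ℝ) < (n:ℝ) + (c + 1 + a)), one_div]
    rw [div_eq_mul_inv]
    apply mul_le_of_le_one_left (by positivity)
    calc ‖z₂ ^ n‖ = ‖z₂‖ ^ n := by rw [norm_pow]
      _ ≤ 1 ^ n := pow_le_pow_left₀ (norm_nonneg _) hz₂ n
      _ = 1 := one_pow n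

lemma my_stepB (a : ℝ) (ha : 0 < a) (z₁ : ℂ) (hz₁ : ‖z₁‖ ≤ 1)
    (s₁ : ℂ) (h1 : 1 < s₁.re) {y : ℝ} (hy : 0 < y) :
    HasSum (fun m : ℕ ↦ Complex.Gamma s₁ * (z₁ ^ m * (Real.exp (-((m + a) * y)) : ℂ)) /
        (((m : ℝ) + a : ℝ) : ℂ) ^ s₁)
      (∫ x in Ioi (0:ℝ), (x : ℂ) ^ (s₁ - 1) *
        ((Real.exp ((1 - a) * (x + y)) : ℂ) / ((Real.exp (x + y) : ℂ) - z₁))) := by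
  have h := hasSum_mellin (a := fun m : ℕ ↦ z₁ ^ m * (Real.exp (-((m + a) * y)) : ℂ))
    (p := fun m : ℕ ↦ (m : ℝ) + a)
    (F := fun x ↦ (Real.exp ((1 - a) * (x + y)) : ℂ) / ((Real.exp (x + y) : ℂ) - z₁)) (s := s₁)
    (fun m ↦ Or.inr (by positivity)) (by linarith) ?_ ?_
  · simpa [mellin, smul_eq_mul] using h
  · intro t ht
    rw [mem_Ioi] at ht
    have hgeo := my_geo_hasSum z₁ hz₁ a (by linarith : (0:ℝ) < t + y)
    convert hgeo using 2 with m
    rw [mul_assoc, ← Complex.ofReal_mul, ← Real.exp_add]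
    congr 2
    ring
  · apply Summable.of_nonneg_of_le (fun m ↦ by positivity) (fun m ↦ ?_)
      ((summable_geometric_of_lt_one (Real.exp_pos (-y)).le
        (Real.exp_lt_one_iff.mpr (by linarith))).mul_right ((a ^ s₁.re)⁻¹))
    rw [div_eq_mul_inv]
    apply mul_le_mul
    · rw [norm_mul, norm_pow, Complex.norm_real, Real.norm_eq_abs,
        abs_of_pos (Real.exp_pos _), ← Real.exp_nat_mul]
      calc ‖z₁‖ ^ m * Real.exp (-((m + a) * y))
          ≤ 1 ^ m * Real.exp (↑m * -y) := by
            apply mul_le_mul (pow_le_pow_left₀ (norm_nonneg _) hz₁ m)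
              (Real.exp_le_exp.mpr (by nlinarith)) (Real.exp_pos _).le (by norm_num)
        _ = Real.exp (↑m * -y) := by rw [one_pow, one_mul]
    · apply inv_anti₀ (by positivity)
      exact Real.rpow_le_rpow ha.le (le_add_of_nonneg_left (by positivity)) (by linarith)
    · positivity
    · positivity

lemma my_bound (z₂ : ℂ) (hz₂ : ‖z₂‖ ≤ 1) (s₂ : ℂ) (r : ℝ) {y : ℝ} (hy : 0 < y) :
    ‖(y : ℂ) ^ (s₂ - 1) * ((Real.exp (-(r * y)) : ℂ) / ((Real.exp y : ℂ) - z₂))‖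
      ≤ y ^ (s₂.re - 2) * Real.exp (-(r * y)) := by
  have hd : y ≤ ‖(Real.exp y : ℂ) - z₂‖ := by
    calc y ≤ Real.exp y - 1 := by linarith [Real.add_one_le_exp y]
      _ ≤ ‖(Real.exp y : ℂ)‖ - ‖z₂‖ := by
          rw [Complex.norm_real, Real.norm_eq_abs,
            abs_of_pos (Real.exp_pos y)]
          linarith
      _ ≤ ‖(Real.exp y : ℂ) - z₂‖ := norm_sub_norm_le _ _
  rw [norm_mul, norm_div]
  have h1 : ‖(y : ℂ) ^ (s₂ - 1)‖ = y ^ (s₂.re - 1) := by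
    rw [Complex.norm_cpow_eq_rpow_re_of_pos hy, Complex.sub_re,
      Complex.one_re]
  have h2 : ‖(Real.exp (-(r * y)) : ℂ)‖ = Real.exp (-(r * y)) := by
    rw [Complex.norm_real, Real.norm_eq_abs, abs_of_pos (Real.exp_pos _)]
  rw [h1, h2]
  calc y ^ (s₂.re - 1) * (Real.exp (-(r * y)) / ‖(Real.exp y : ℂ) - z₂‖)
      ≤ y ^ (s₂.re - 1) * (Real.exp (-(r * y)) / y) := by
        gcongr
      _ = y ^ (s₂.re - 2) * Real.exp (-(r * y)) := by
        have hxy : y ^ (s₂.re - 2) = y ^ (s₂.re - 1) / y := by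
          rw [show s₂.re - 2 = s₂.re - 1 - 1 by ring, Real.rpow_sub hy, Real.rpow_one]
        rw [hxy]
        ring

lemma my_integrableG (z₂ : ℂ) (hz₂ : ‖z₂‖ ≤ 1) (s₂ : ℂ) (h2 : 1 < s₂.re)
    {r : ℝ} (hr : 0 < r) :
    IntegrableOn (fun y : ℝ ↦ (y : ℂ) ^ (s₂ - 1) *
      ((Real.exp (-(r * y)) : ℂ) / ((Real.exp y : ℂ) - z₂))) (Ioi 0) := by
  apply Integrable.mono' (my_aux_int (show (-1:ℝ) < s₂.re - 2 by linarith) hr)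
  · apply ContinuousOn.aestronglyMeasurable ?_ measurableSet_Ioi
    apply ContinuousOn.mul
    · intro y hy
      exact ((continuousAt_cpow_const (Complex.ofReal_mem_slitPlane.2 hy)).comp
        Complex.continuous_ofReal.continuousAt).continuousWithinAt
    · apply ContinuousOn.div
      · exact (Complex.continuous_ofReal.comp
          (Real.continuous_exp.comp (continuous_const.mul continuous_id).neg)).continuousOn
      · exact ((Complex.continuous_ofReal.comp Real.continuous_exp).sub
          continuous_const).continuousOn
      · intro y hy
        exact my_exp_sub_ne z₂ hz₂ hy
  · rw [ae_restrict_iff' measurableSet_Ioi]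
    filter_upwards with y hy
    exact my_bound z₂ hz₂ s₂ r hy


/-- The Hurwitz–Lerch type Euler–Zagier double zeta series
`∑_{m≥0} z₁^m (m+a)^(-s₁) ∑_{n≥1} z₂^(n-1) (m+n+a)^(-s₂)`. -/
noncomputable def lerchDoubleZeta (a : ℝ) (z₁ z₂ : ℂ) (s₁ s₂ : ℂ) : ℂ :=
  ∑' m : ℕ, z₁ ^ m / ((m : ℂ) + a) ^ s₁ *
    ∑' n : ℕ, z₂ ^ n / ((m : ℂ) + (n + 1) + a) ^ s₂

theorem gamma_mul_lerchDoubleZeta_eq_integral (a : ℝ) (ha : 0 < a) (ha' : a ≤ 1)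
    (z₁ z₂ : ℂ) (hz₁0 : 0 < ‖z₁‖) (hz₁1 : ‖z₁‖ ≤ 1)
    (hz₂0 : 0 < ‖z₂‖) (hz₂1 : ‖z₂‖ ≤ 1)
    (s₁ s₂ : ℂ) (h1 : 1 < s₁.re) (h2 : 1 < s₂.re) :
    Complex.Gamma s₁ * Complex.Gamma s₂ * lerchDoubleZeta a z₁ z₂ s₁ s₂ =
      ∫ y in Ioi (0 : ℝ), (y : ℂ) ^ (s₂ - 1) / ((Real.exp y : ℂ) - z₂) *
        ∫ x in Ioi (0 : ℝ),
          (x : ℂ) ^ (s₁ - 1) * (Real.exp ((1 - a) * (x + y)) : ℂ) /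
            ((Real.exp (x + y) : ℂ) - z₁) := by
  set c : ℕ → ℂ := fun m ↦ Complex.Gamma s₁ * z₁ ^ m / ((m : ℂ) + a) ^ s₁ with hc
  set G : ℕ → ℝ → ℂ := fun m y ↦ (y : ℂ) ^ (s₂ - 1) *
    ((Real.exp (-(((m : ℝ) + a) * y)) : ℂ) / ((Real.exp y : ℂ) - z₂)) with hG
  have hqm : ∀ m : ℕ, (0:ℝ) < (m : ℝ) + a := fun m ↦ by positivity
  have hcast : ∀ m : ℕ, ((m : ℂ) + (a : ℂ)) = (((m : ℝ) + a : ℝ) : ℂ) := fun m ↦ by push_cast; ring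
  -- Step 1 : LHS = ∑' m, ∫ y, c m * G m y
  have step1 : Complex.Gamma s₁ * Complex.Gamma s₂ * lerchDoubleZeta a z₁ z₂ s₁ s₂
      = ∑' m : ℕ, ∫ y in Ioi (0:ℝ), c m * G m y := by
    rw [lerchDoubleZeta, ← tsum_mul_left]
    refine tsum_congr fun m ↦ ?_
    have hA := my_stepA a ha z₂ hz₂1 s₂ h2 (m : ℝ) (Nat.cast_nonneg m)
    have hA2 : Complex.Gamma s₂ * ∑' n : ℕ, z₂ ^ n / ((m : ℂ) + (n + 1) + a) ^ s₂
        = ∫ y in Ioi (0:ℝ), G m y := by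
      rw [← hA.tsum_eq, ← tsum_mul_left]
      refine tsum_congr fun n ↦ ?_
      rw [mul_div_assoc]
      congr 2
      push_cast
      ring
    calc Complex.Gamma s₁ * Complex.Gamma s₂ *
          (z₁ ^ m / ((m : ℂ) + a) ^ s₁ * ∑' n : ℕ, z₂ ^ n / ((m : ℂ) + (n + 1) + a) ^ s₂)
        = c m * (Complex.Gamma s₂ * ∑' n : ℕ, z₂ ^ n / ((m : ℂ) + (n + 1) + a) ^ s₂) := by
          rw [hc]; ring
      _ = c m * ∫ y in Ioi (0:ℝ), G m y := by rw [hA2]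
      _ = ∫ y in Ioi (0:ℝ), c m * G m y := (integral_const_mul _ _).symm
  -- Integrability
  have hGint : ∀ m : ℕ, IntegrableOn (G m) (Ioi 0) :=
    fun m ↦ my_integrableG z₂ hz₂1 s₂ h2 (hqm m)
  have hFint : ∀ m : ℕ, Integrable (fun y ↦ c m * G m y) (volume.restrict (Ioi 0)) :=
    fun m ↦ (hGint m).const_mul _
  -- Summability of the integrals of norms
  have hsum : Summable (fun m : ℕ ↦ ∫ y in Ioi (0:ℝ), ‖c m * G m y‖) := by
    have hbig : Summable (fun m : ℕ ↦ ‖Complex.Gamma s₁‖ * Real.Gamma (s₂.re - 1) *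
        (1 / |(m : ℝ) + a| ^ (s₁.re + s₂.re - 1))) :=
      ((Real.summable_one_div_nat_add_rpow a (s₁.re + s₂.re - 1)).mpr (by linarith)).mul_left _
    apply Summable.of_nonneg_of_le
      (fun m ↦ integral_nonneg fun y ↦ norm_nonneg _) (fun m ↦ ?_) hbig
    have hGnorm : (∫ y in Ioi (0:ℝ), ‖G m y‖)
        ≤ (1 / ((m : ℝ) + a)) ^ (s₂.re - 1) * Real.Gamma (s₂.re - 1) := by
      rw [← Real.integral_rpow_mul_exp_neg_mul_Ioi (show 0 < s₂.re - 1 by linarith) (hqm m)]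
      apply integral_mono_of_nonneg (Filter.Eventually.of_forall fun y ↦ norm_nonneg _)
        (my_aux_int (show (-1:ℝ) < s₂.re - 1 - 1 by linarith) (hqm m))
      filter_upwards [ae_restrict_mem measurableSet_Ioi] with y hy
      rw [show (s₂.re - 1 - 1 : ℝ) = s₂.re - 2 by ring]
      exact my_bound z₂ hz₂1 s₂ ((m : ℝ) + a) hy
    have hcnorm : ‖c m‖ ≤ ‖Complex.Gamma s₁‖ * ((((m : ℝ) + a) ^ s₁.re)⁻¹) := by
      rw [hc]
      simp only []
      rw [norm_div, norm_mul, hcast m,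
        Complex.norm_cpow_eq_rpow_re_of_pos (hqm m), div_eq_mul_inv]
      apply mul_le_mul_of_nonneg_right _ (by positivity)
      apply mul_le_of_le_one_right (norm_nonneg _)
      rw [norm_pow]
      exact pow_le_one₀ (norm_nonneg _) hz₁1
    calc (∫ y in Ioi (0:ℝ), ‖c m * G m y‖) = ‖c m‖ * ∫ y in Ioi (0:ℝ), ‖G m y‖ := by
          simp_rw [norm_mul]
          rw [integral_const_mul]
      _ ≤ (‖Complex.Gamma s₁‖ * ((((m : ℝ) + a) ^ s₁.re)⁻¹)) *
            ((1 / ((m : ℝ) + a)) ^ (s₂.re - 1) * Real.Gamma (s₂.re - 1)) :=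
          mul_le_mul hcnorm hGnorm (integral_nonneg fun y ↦ norm_nonneg _) (by positivity)
      _ = ‖Complex.Gamma s₁‖ * Real.Gamma (s₂.re - 1) *
            (1 / |(m : ℝ) + a| ^ (s₁.re + s₂.re - 1)) := by
          rw [abs_of_pos (hqm m), one_div, one_div, Real.inv_rpow (hqm m).le,
            show s₁.re + s₂.re - 1 = s₁.re + (s₂.re - 1) by ring, Real.rpow_add (hqm m), mul_inv]
          ring
  -- Swap sum and integral
  have step2 := MeasureTheory.integral_tsum_of_summable_integral_norm hFint hsum
  rw [step1, step2]
  -- Pointwise identity in y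
  refine setIntegral_congr_fun measurableSet_Ioi fun y hy ↦ ?_
  rw [mem_Ioi] at hy
  have hB := my_stepB a ha z₁ hz₁1 s₁ h1 hy
  have key : ∀ m : ℕ, c m * G m y
      = (y : ℂ) ^ (s₂ - 1) / ((Real.exp y : ℂ) - z₂) *
        (Complex.Gamma s₁ * (z₁ ^ m * (Real.exp (-(((m : ℝ) + a) * y)) : ℂ)) /
          (((m : ℝ) + a : ℝ) : ℂ) ^ s₁) := by
    intro m
    rw [hc, hG]
    simp only []
    rw [hcast m]
    ring
  calc ∑' m : ℕ, c m * G m y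
      = ∑' m : ℕ, (y : ℂ) ^ (s₂ - 1) / ((Real.exp y : ℂ) - z₂) *
        (Complex.Gamma s₁ * (z₁ ^ m * (Real.exp (-(((m : ℝ) + a) * y)) : ℂ)) /
          (((m : ℝ) + a : ℝ) : ℂ) ^ s₁) := tsum_congr key
    _ = (y : ℂ) ^ (s₂ - 1) / ((Real.exp y : ℂ) - z₂) *
        ∑' m : ℕ, Complex.Gamma s₁ * (z₁ ^ m * (Real.exp (-(((m : ℝ) + a) * y)) : ℂ)) /
          (((m : ℝ) + a : ℝ) : ℂ) ^ s₁ := tsum_mul_left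
    _ = (y : ℂ) ^ (s₂ - 1) / ((Real.exp y : ℂ) - z₂) *
        ∫ x in Ioi (0:ℝ), (x : ℂ) ^ (s₁ - 1) *
          ((Real.exp ((1 - a) * (x + y)) : ℂ) / ((Real.exp (x + y) : ℂ) - z₁)) := by
        rw [hB.tsum_eq]
    _ = (y : ℂ) ^ (s₂ - 1) / ((Real.exp y : ℂ) - z₂) *
        ∫ x in Ioi (0:ℝ), (x : ℂ) ^ (s₁ - 1) * (Real.exp ((1 - a) * (x + y)) : ℂ) /
          ((Real.exp (x + y) : ℂ) - z₁) := by
        congr 1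
        refine setIntegral_congr_fun measurableSet_Ioi fun x hx ↦ ?_
        rw [mul_div_assoc]

end Aux
end

section
/- Let 0 < a ≤ 1 and let z₂ ∈ ℂ with 0 < |z₂| ≤ 1 and z₂ ≠ 1. Then for all real σ₁ > 1 and σ₂ > 0, the quantity Φ₂(σ₁,σ₂,a,1,z₂) := (1/(Γ(σ₁)Γ(σ₂))) ∫_0^∞ ∫_0^∞ x^{σ₁-1} y^{σ₂-1} e^{(1-a)(x+y)} / ((e^y − z₂)(e^{x+y} − 1)) dx dy is nonzero. Moreover, if z₂ is real with −1 ≤ z₂ < 1 then Φ₂(σ₁,σ₂,a,1,z₂) > 0, and if Im(z₂) ≠ 0 then Im(Φ₂(σ₁,σ₂,a,1,z₂)) ≠ 0. -/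
open Set

/-- The Hurwitz–Lerch type Euler–Zagier double zeta function, given by its
double integral representation. -/
noncomputable def Phi2Int (a : ℝ) (z₁ z₂ : ℂ) (σ₁ σ₂ : ℝ) : ℂ :=
  (1 / ((Real.Gamma σ₁ : ℂ) * (Real.Gamma σ₂ : ℂ))) *
    ∫ y in Ioi (0 : ℝ), ∫ x in Ioi (0 : ℝ),
      ((x ^ (σ₁ - 1) * y ^ (σ₂ - 1) * Real.exp ((1 - a) * (x + y)) : ℝ) : ℂ) /
        (((Real.exp y : ℂ) - z₂) * ((Real.exp (x + y) : ℂ) - z₁))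

open MeasureTheory

private lemma key_exp_bound {a t : ℝ} (ha' : a ≤ 1) (ht : 0 < t) :
    Real.exp ((1 - a) * t) / (Real.exp t - 1) ≤ Real.exp (-a * t) * (1 + 1 / t) := by
  have hDt : t ≤ Real.exp t - 1 := by linarith [Real.add_one_le_exp t]
  have hD : 0 < Real.exp t - 1 := lt_of_lt_of_le ht hDt
  have h1 : Real.exp ((1 - a) * t) = Real.exp (-a * t) * Real.exp t := by
    rw [← Real.exp_add]; ring_nf
  rw [h1, mul_div_assoc]
  refine mul_le_mul_of_nonneg_left ?_ (Real.exp_nonneg _)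
  rw [div_le_iff₀ hD]
  have h2 : 1 ≤ (Real.exp t - 1) / t := (one_le_div ht).mpr hDt
  have h3 : (1 + 1 / t) * (Real.exp t - 1) = (Real.exp t - 1) + (Real.exp t - 1) / t := by
    field_simp
  rw [h3]
  linarith

theorem phi2_one_z2_ne_zero (a : ℝ) (ha : 0 < a) (ha' : a ≤ 1)
    (z₂ : ℂ) (hz0 : 0 < ‖z₂‖) (hz1 : ‖z₂‖ ≤ 1) (hz : z₂ ≠ 1)
    (σ₁ σ₂ : ℝ) (h1 : 1 < σ₁) (h2 : 0 < σ₂) :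
    Phi2Int a 1 z₂ σ₁ σ₂ ≠ 0 ∧
    (z₂.im = 0 → -1 ≤ z₂.re → z₂.re < 1 →
      (Phi2Int a 1 z₂ σ₁ σ₂).im = 0 ∧ 0 < (Phi2Int a 1 z₂ σ₁ σ₂).re) ∧
    (z₂.im ≠ 0 → (Phi2Int a 1 z₂ σ₁ σ₂).im ≠ 0) := by
  have hΓ1 := Real.Gamma_pos_of_pos (lt_trans one_pos h1)
  have hΓ2 := Real.Gamma_pos_of_pos h2
  set c : ℝ := (Real.Gamma σ₁ * Real.Gamma σ₂)⁻¹ with hc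
  have hcpos : 0 < c := inv_pos.mpr (mul_pos hΓ1 hΓ2)
  set h : ℝ → ℝ → ℝ := fun x y =>
    x ^ (σ₁ - 1) * y ^ (σ₂ - 1) * Real.exp ((1 - a) * (x + y)) /
      (Real.exp (x + y) - 1) with hh
  set w : ℝ → ℂ := fun y => ((Real.exp y : ℂ) - z₂)⁻¹ with hw
  set δ : ℝ := ‖1 - z₂‖ / 2 with hδdef
  have hδpos : 0 < δ := by
    have h0 : (1 : ℂ) - z₂ ≠ 0 := sub_ne_zero.mpr (Ne.symm hz)
    have := norm_pos_iff.mpr h0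
    positivity
  -- uniform lower bound on the denominator
  have hδ : ∀ y : ℝ, 0 ≤ y → δ ≤ ‖(Real.exp y : ℂ) - z₂‖ := by
    intro y hy
    have hey : 1 ≤ Real.exp y := by linarith [Real.add_one_le_exp y]
    have habs1 : ‖(Real.exp y : ℂ) - 1‖ = Real.exp y - 1 := by
      rw [show ((Real.exp y : ℂ) - 1) = ((Real.exp y - 1 : ℝ) : ℂ) by push_cast; ring,
        Complex.norm_real, Real.norm_eq_abs, abs_of_nonneg (by linarith)]
    rcases le_or_gt δ (Real.exp y - 1) with hcase | hcase
    · have habs : Real.exp y - ‖z₂‖ ≤ ‖(Real.exp y : ℂ) - z₂‖ := by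
        have := norm_sub_norm_le ((Real.exp y : ℂ)) z₂
        simpa [Complex.norm_real, Real.norm_eq_abs, abs_of_nonneg (by linarith : (0:ℝ) ≤ Real.exp y)]
          using this
      linarith
    · have htri : ‖1 - z₂‖ ≤ ‖(1 : ℂ) - (Real.exp y : ℂ)‖ +
          ‖(Real.exp y : ℂ) - z₂‖ := by
        have := dist_triangle (1 : ℂ) ((Real.exp y : ℂ)) z₂
        simpa [Complex.dist_eq] using this
      have habs1' : ‖(1 : ℂ) - (Real.exp y : ℂ)‖ = Real.exp y - 1 := by
        rw [← habs1, ← norm_neg]; ring_nf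
      rw [habs1'] at htri
      have : 2 * δ = ‖1 - z₂‖ := by rw [hδdef]; ring
      linarith
  have hmeas2 : Measurable (fun p : ℝ × ℝ => h p.1 p.2) := by
    simp only [hh]; fun_prop
  have hmx : ∀ y : ℝ, Measurable (fun x => h x y) := fun y =>
    hmeas2.comp (measurable_id.prodMk measurable_const)
  set I : ℝ → ℝ := fun y => ∫ x in Ioi (0 : ℝ), h x y with hI
  set g1 : ℝ → ℝ := fun x => (x ^ (σ₁ - 1) + x ^ (σ₁ - 2)) * Real.exp (-a * x) with hg1
  set g2 : ℝ → ℝ := fun y => y ^ (σ₂ - 1) * Real.exp (-a * y) with hg2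
  have hg1int : IntegrableOn g1 (Ioi 0) := by
    have A := integrableOn_rpow_mul_exp_neg_mul_rpow (s := σ₁ - 1) (p := 1)
      (by linarith) one_pos ha
    have B := integrableOn_rpow_mul_exp_neg_mul_rpow (s := σ₁ - 2) (p := 1)
      (by linarith) one_pos ha
    simp only [Real.rpow_one] at A B
    refine MeasureTheory.IntegrableOn.congr_fun (A.add B) (fun x _ => ?_) measurableSet_Ioi
    simp only [hg1, Pi.add_apply]; ring
  have hg2int : IntegrableOn g2 (Ioi 0) := by
    have A := integrableOn_rpow_mul_exp_neg_mul_rpow (s := σ₂ - 1) (p := 1)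
      (by linarith) one_pos ha
    simp only [Real.rpow_one] at A
    exact A
  -- pointwise positivity and bound for h
  have hpos : ∀ x ∈ Ioi (0:ℝ), ∀ y ∈ Ioi (0:ℝ), 0 < h x y := by
    intro x hx y hy
    have hx0 : (0:ℝ) < x := hx
    have hy0 : (0:ℝ) < y := hy
    have hD : 0 < Real.exp (x + y) - 1 := by linarith [Real.add_one_le_exp (x + y)]
    have hX : (0:ℝ) < x ^ (σ₁ - 1) := Real.rpow_pos_of_pos hx0 _
    have hY : (0:ℝ) < y ^ (σ₂ - 1) := Real.rpow_pos_of_pos hy0 _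
    simp only [hh]
    positivity
  have hbound : ∀ x ∈ Ioi (0:ℝ), ∀ y ∈ Ioi (0:ℝ), h x y ≤ g2 y * g1 x := by
    intro x hx y hy
    have hx0 : (0:ℝ) < x := hx
    have hy0 : (0:ℝ) < y := hy
    have ht : 0 < x + y := by linarith
    have hkey := key_exp_bound ha' ht
    have hX : (0:ℝ) < x ^ (σ₁ - 1) := Real.rpow_pos_of_pos hx0 _
    have hY : (0:ℝ) < y ^ (σ₂ - 1) := Real.rpow_pos_of_pos hy0 _
    have hmul : x ^ (σ₁ - 2) * x = x ^ (σ₁ - 1) := by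
      have e := Real.rpow_add hx0 (σ₁ - 2) 1
      rw [Real.rpow_one] at e
      rw [← e]
      congr 1
      ring
    have hxx : x ^ (σ₁ - 1) * (1 + 1 / x) = x ^ (σ₁ - 1) + x ^ (σ₁ - 2) := by
      calc x ^ (σ₁ - 1) * (1 + 1 / x) = x ^ (σ₁ - 1) + x ^ (σ₁ - 1) * (1 / x) := by ring
        _ = x ^ (σ₁ - 1) + x ^ (σ₁ - 2) := by rw [← hmul]; field_simp
    have step1 : h x y ≤ x ^ (σ₁ - 1) * y ^ (σ₂ - 1) *
        (Real.exp (-a * (x + y)) * (1 + 1 / (x + y))) := by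
      have e1 : h x y = x ^ (σ₁ - 1) * y ^ (σ₂ - 1) *
          (Real.exp ((1 - a) * (x + y)) / (Real.exp (x + y) - 1)) := by
        simp only [hh]; ring
      rw [e1]
      exact mul_le_mul_of_nonneg_left hkey (by positivity)
    calc h x y ≤ x ^ (σ₁ - 1) * y ^ (σ₂ - 1) *
          (Real.exp (-a * (x + y)) * (1 + 1 / (x + y))) := step1
      _ ≤ x ^ (σ₁ - 1) * y ^ (σ₂ - 1) *
          (Real.exp (-a * (x + y)) * (1 + 1 / x)) := by
          have h1x : 1 / (x + y) ≤ 1 / x := by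
            apply one_div_le_one_div_of_le hx0; linarith
          have hE := Real.exp_nonneg (-a * (x + y))
          refine mul_le_mul_of_nonneg_left ?_ (mul_pos hX hY).le
          exact mul_le_mul_of_nonneg_left (by linarith) hE
      _ = g2 y * g1 x := by
          simp only [hg1, hg2]
          rw [show -a * (x + y) = -a * x + -a * y by ring, Real.exp_add, ← hxx]
          ring
  -- inner integrability, positivity, bound
  have hIint : ∀ y ∈ Ioi (0:ℝ), IntegrableOn (fun x => h x y) (Ioi 0) := by
    intro y hy
    refine Integrable.mono' (hg1int.const_mul (g2 y)) ((hmx y).aestronglyMeasurable) ?_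
    filter_upwards [ae_restrict_mem measurableSet_Ioi] with x hx
    rw [Real.norm_eq_abs, abs_of_nonneg (hpos x hx y hy).le]
    exact hbound x hx y hy
  have hIpos : ∀ y ∈ Ioi (0:ℝ), 0 < I y := by
    intro y hy
    refine (setIntegral_pos_iff_support_of_nonneg_ae ?_ (hIint y hy)).mpr ?_
    · filter_upwards [ae_restrict_mem measurableSet_Ioi] with x hx
      exact (hpos x hx y hy).le
    · refine lt_of_lt_of_le ?_
        (measure_mono (fun x hx => ⟨(hpos x hx y hy).ne', hx⟩ :
          Ioi (0:ℝ) ⊆ Function.support (fun x => h x y) ∩ Ioi 0))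
      rw [Real.volume_Ioi]
      exact ENNReal.zero_lt_top
  have hInn : ∀ y ∈ Ioi (0:ℝ), 0 ≤ I y := fun y hy => (hIpos y hy).le
  set K : ℝ := ∫ x in Ioi (0:ℝ), g1 x with hK
  have hKnn : 0 ≤ K := by
    refine setIntegral_nonneg measurableSet_Ioi (fun x hx => ?_)
    have hx0 : (0:ℝ) < x := hx
    have hX : (0:ℝ) < x ^ (σ₁ - 1) := Real.rpow_pos_of_pos hx0 _
    have hX' : (0:ℝ) < x ^ (σ₁ - 2) := Real.rpow_pos_of_pos hx0 _
    simp only [hg1]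
    positivity
  have hIle : ∀ y ∈ Ioi (0:ℝ), I y ≤ g2 y * K := by
    intro y hy
    calc I y ≤ ∫ x in Ioi (0:ℝ), g2 y * g1 x :=
        setIntegral_mono_on (hIint y hy) (hg1int.const_mul _) measurableSet_Ioi
          (fun x hx => hbound x hx y hy)
      _ = g2 y * K := by rw [integral_const_mul]
  have hg2nn : ∀ y ∈ Ioi (0:ℝ), 0 ≤ g2 y := by
    intro y hy
    have hy0 : (0:ℝ) < y := hy
    have hY : (0:ℝ) < y ^ (σ₂ - 1) := Real.rpow_pos_of_pos hy0 _
    simp only [hg2]; positivity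
  have hImeas : StronglyMeasurable I := by
    have : StronglyMeasurable (fun p : ℝ × ℝ => h p.2 p.1) :=
      (hmeas2.comp measurable_swap).stronglyMeasurable
    exact this.integral_prod_right'
  -- the outer integrand
  set F : ℝ → ℂ := fun y => (I y : ℂ) * w y with hF
  have hwmeas : Measurable w := by
    simp only [hw]
    exact ((Complex.measurable_ofReal.comp Real.measurable_exp).sub measurable_const).inv
  have hwle : ∀ y : ℝ, 0 ≤ y → ‖w y‖ ≤ δ⁻¹ := by
    intro y hy
    simp only [hw, norm_inv]
    exact inv_anti₀ hδpos (hδ y hy)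
  have hFint : IntegrableOn F (Ioi 0) := by
    refine Integrable.mono' (hg2int.const_mul (K * δ⁻¹))
      (((Complex.measurable_ofReal.comp hImeas.measurable).mul hwmeas).aestronglyMeasurable) ?_
    filter_upwards [ae_restrict_mem measurableSet_Ioi] with y hy
    have hy0 : (0:ℝ) < y := hy
    calc ‖F y‖ = I y * ‖w y‖ := by
          rw [hF, norm_mul, Complex.norm_real, Real.norm_eq_abs,
            abs_of_nonneg (hInn y hy)]
      _ ≤ (g2 y * K) * δ⁻¹ := by
          refine mul_le_mul (hIle y hy) (hwle y hy0.le) (norm_nonneg _) ?_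
          exact mul_nonneg (hg2nn y hy) hKnn
      _ = K * δ⁻¹ * g2 y := by ring
  -- identify the inner integral
  have hinner : ∀ y : ℝ, (∫ x in Ioi (0:ℝ),
      ((x ^ (σ₁ - 1) * y ^ (σ₂ - 1) * Real.exp ((1 - a) * (x + y)) : ℝ) : ℂ) /
        (((Real.exp y : ℂ) - z₂) * ((Real.exp (x + y) : ℂ) - 1))) = F y := by
    intro y
    have e0 : ∀ x : ℝ,
        ((x ^ (σ₁ - 1) * y ^ (σ₂ - 1) * Real.exp ((1 - a) * (x + y)) : ℝ) : ℂ) /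
          (((Real.exp y : ℂ) - z₂) * ((Real.exp (x + y) : ℂ) - 1)) =
        ((h x y : ℝ) : ℂ) * w y := by
      intro x
      have e1 : ((Real.exp (x + y) : ℂ) - 1) = ((Real.exp (x + y) - 1 : ℝ) : ℂ) := by
        push_cast; ring
      simp only [hh, hw]
      rw [e1, Complex.ofReal_div, div_eq_mul_inv, div_eq_mul_inv, mul_inv]
      ring
    simp_rw [e0]
    rw [integral_mul_const]
    simp only [hF, hI]
    congr 1
    exact integral_ofReal
  set Z : ℂ := ∫ y in Ioi (0:ℝ), F y with hZ
  have hPhi : Phi2Int a 1 z₂ σ₁ σ₂ = (c : ℂ) * Z := by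
    simp only [Phi2Int]
    congr 1
    · rw [hc]; push_cast; rw [one_div]
    · rw [hZ]
      exact integral_congr_ae (Filter.Eventually.of_forall (fun y => hinner y))
  have hPhiRe : (Phi2Int a 1 z₂ σ₁ σ₂).re = c * Z.re := by
    rw [hPhi]; simp [Complex.mul_re]
  have hPhiIm : (Phi2Int a 1 z₂ σ₁ σ₂).im = c * Z.im := by
    rw [hPhi]; simp [Complex.mul_im]
  -- positivity engine
  have hkey : ∀ (φ : ℝ → ℝ) (M : ℝ), Measurable φ → (∀ y ∈ Ioi (0:ℝ), 0 < φ y) →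
      (∀ y ∈ Ioi (0:ℝ), φ y ≤ M) → 0 < ∫ y in Ioi (0:ℝ), I y * φ y := by
    intro φ M hφm hφpos hφle
    have hint : IntegrableOn (fun y => I y * φ y) (Ioi 0) := by
      refine Integrable.mono' (hg2int.const_mul (K * M))
        ((hImeas.measurable.mul hφm).aestronglyMeasurable) ?_
      filter_upwards [ae_restrict_mem measurableSet_Ioi] with y hy
      rw [Real.norm_eq_abs, abs_of_nonneg (mul_nonneg (hInn y hy) (hφpos y hy).le)]
      calc I y * φ y ≤ (g2 y * K) * M := by
            refine mul_le_mul (hIle y hy) (hφle y hy) (hφpos y hy).le ?_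
            exact mul_nonneg (hg2nn y hy) hKnn
        _ = K * M * g2 y := by ring
    refine (setIntegral_pos_iff_support_of_nonneg_ae ?_ hint).mpr ?_
    · filter_upwards [ae_restrict_mem measurableSet_Ioi] with y hy
      exact mul_nonneg (hInn y hy) (hφpos y hy).le
    · refine lt_of_lt_of_le ?_
        (measure_mono (fun y hy => ⟨(mul_pos (hIpos y hy) (hφpos y hy)).ne', hy⟩ :
          Ioi (0:ℝ) ⊆ Function.support (fun y => I y * φ y) ∩ Ioi 0))
      rw [Real.volume_Ioi]
      exact ENNReal.zero_lt_top
  -- the real case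
  have hreal : z₂.im = 0 → z₂.re < 1 → Z.im = 0 ∧ 0 < Z.re := by
    intro him hlt
    have hz₂ : z₂ = ((z₂.re : ℝ) : ℂ) := Complex.ext rfl (by simp [him])
    set t : ℝ := z₂.re
    have hwt : ∀ y : ℝ, w y = (((Real.exp y - t)⁻¹ : ℝ) : ℂ) := by
      intro y
      rw [hw, hz₂]
      push_cast
      rfl
    have hZeq : Z = ((∫ y in Ioi (0:ℝ), I y * (Real.exp y - t)⁻¹ : ℝ) : ℂ) := by
      rw [hZ]
      have : ∀ y : ℝ, F y = (((I y * (Real.exp y - t)⁻¹ : ℝ)) : ℂ) := by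
        intro y
        simp only [hF]
        rw [hwt]
        push_cast
        ring
      simp_rw [this]
      exact integral_ofReal
    have hpos' : 0 < ∫ y in Ioi (0:ℝ), I y * (Real.exp y - t)⁻¹ := by
      refine hkey _ ((1 - t)⁻¹) ((Real.measurable_exp.sub measurable_const).inv) ?_ ?_
      · intro y hy
        have hy0 : (0:ℝ) < y := hy
        have : 1 < Real.exp y := by linarith [Real.add_one_le_exp y]
        exact inv_pos.mpr (by linarith)
      · intro y hy
        have hy0 : (0:ℝ) < y := hy
        have : 1 < Real.exp y := by linarith [Real.add_one_le_exp y]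
        exact inv_anti₀ (by linarith) (by linarith)
    rw [hZeq]
    exact ⟨by simp, by simpa using hpos'⟩
  -- the imaginary case
  have himag : z₂.im ≠ 0 → Z.im ≠ 0 := by
    intro him
    have hZim : Z.im = z₂.im *
        ∫ y in Ioi (0:ℝ), I y * (Complex.normSq ((Real.exp y : ℂ) - z₂))⁻¹ := by
      have him2 := integral_im (𝕜 := ℂ) (μ := volume.restrict (Ioi (0:ℝ))) hFint
      simp only [RCLike.im_to_complex] at him2
      rw [hZ, ← him2, ← integral_const_mul]
      refine integral_congr_ae (Filter.Eventually.of_forall (fun y => ?_))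
      have e1 : (w y).im = z₂.im / Complex.normSq ((Real.exp y : ℂ) - z₂) := by
        simp only [hw]
        rw [Complex.inv_im]
        simp [Complex.sub_im]
      simp only [hF]
      rw [Complex.im_ofReal_mul, e1, div_eq_mul_inv]
      ring
    rw [hZim]
    refine mul_ne_zero him ?_
    refine (hkey _ ((δ ^ 2)⁻¹)
      ((Complex.continuous_normSq.measurable.comp
        ((Complex.measurable_ofReal.comp Real.measurable_exp).sub measurable_const)).inv)
      ?_ ?_).ne'
    · intro y hy
      have hy0 : (0:ℝ) < y := hy
      have hne : ((Real.exp y : ℂ) - z₂) ≠ 0 := by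
        intro hcon
        have := hδ y hy0.le
        rw [hcon] at this
        simp at this
        linarith
      exact inv_pos.mpr (Complex.normSq_pos.mpr hne)
    · intro y hy
      have hy0 : (0:ℝ) < y := hy
      have h1 : δ ^ 2 ≤ Complex.normSq ((Real.exp y : ℂ) - z₂) := by
        rw [Complex.normSq_eq_norm_sq]
        exact pow_le_pow_left₀ hδpos.le (hδ y hy0.le) 2
      exact inv_anti₀ (by positivity) h1
  -- assemble
  have hre_ne_one : z₂.im = 0 → z₂.re < 1 := by
    intro him
    have h3 : |z₂.re| ≤ 1 := le_trans (Complex.abs_re_le_norm z₂) hz1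
    rcases lt_or_eq_of_le (abs_le.mp h3).2 with h4 | h4
    · exact h4
    · exact absurd (Complex.ext h4 (by simp [him])) hz
  refine ⟨?_, ?_, ?_⟩
  · by_cases him : z₂.im = 0
    · obtain ⟨_, hZre⟩ := hreal him (hre_ne_one him)
      intro hcon
      rw [hcon] at hPhiRe
      simp at hPhiRe
      rcases hPhiRe with h | h
      · exact hcpos.ne' h
      · exact hZre.ne' h
    · intro hcon
      have := himag him
      rw [hcon] at hPhiIm
      simp at hPhiIm
      rcases hPhiIm with h | h
      · exact hcpos.ne' h
      · exact this h
  · intro him _ hlt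
    obtain ⟨hZim, hZre⟩ := hreal him hlt
    constructor
    · rw [hPhiIm, hZim, mul_zero]
    · rw [hPhiRe]; exact mul_pos hcpos hZre
  · intro him
    have hZim := himag him
    rw [hPhiIm]
    exact mul_ne_zero hcpos.ne' hZim
end

section
/- Let 0 < a ≤ 1 and let z₁ ∈ ℂ with 0 < |z₁| ≤ 1 and z₁ ≠ 1. Then for all real σ₁ > 0 and σ₂ > 1, the quantity Φ₂(σ₁,σ₂,a,z₁,1) := (1/(Γ(σ₁)Γ(σ₂))) ∫_0^∞ ∫_0^∞ x^{σ₁-1} y^{σ₂-1} e^{(1-a)(x+y)} / ((e^y − 1)(e^{x+y} − z₁)) dx dy is nonzero. -/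
open Set MeasureTheory

private lemma meas_rpow_aux (c : ℝ) : Measurable fun t : ℝ => t ^ c := by
  measurability


theorem phi2_z1_one_ne_zero (a : ℝ) (ha : 0 < a) (ha' : a ≤ 1)
    (z₁ : ℂ) (hz0 : 0 < ‖z₁‖) (hz1 : ‖z₁‖ ≤ 1) (hz : z₁ ≠ 1)
    (σ₁ σ₂ : ℝ) (h1 : 0 < σ₁) (h2 : 1 < σ₂) :
    Phi2Int a z₁ 1 σ₁ σ₂ ≠ 0 := by
  -- the integrand
  set f : ℝ → ℝ → ℂ := fun x y =>
    ((x ^ (σ₁ - 1) * y ^ (σ₂ - 1) * Real.exp ((1 - a) * (x + y)) : ℝ) : ℂ) /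
      (((Real.exp y : ℂ) - 1) * ((Real.exp (x + y) : ℂ) - z₁)) with hfdef
  -- real part of z₁ is < 1
  have hre1 : z₁.re < 1 := by
    by_contra hcon
    push_neg at hcon
    have h1' : z₁.re ≤ ‖z₁‖ := (le_abs_self _).trans (Complex.abs_re_le_norm z₁)
    have hr : z₁.re = 1 := le_antisymm (h1'.trans hz1) hcon
    have hA : ‖z₁‖ = 1 := le_antisymm hz1 (by rw [← hr]; exact h1')
    have hn : Complex.normSq z₁ = 1 := by
      rw [← Complex.sq_norm, hA]; norm_num
    have him : z₁.im = 0 := by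
      have h := Complex.normSq_apply z₁
      nlinarith [h, hn, hr]
    exact hz (Complex.ext (by simp [hr]) (by simp [him]))
  -- lower bound for the modulus of the denominator
  set δ : ℝ := ‖1 - z₁‖ with hδdef
  have hδ : 0 < δ := by
    have : (1 : ℂ) - z₁ ≠ 0 := sub_ne_zero.mpr (Ne.symm hz)
    simpa [hδdef] using (norm_pos_iff.mpr this)
  set c : ℝ := min δ 1 with hcdef
  have hc : 0 < c := lt_min hδ one_pos
  have key : ∀ t : ℝ, 0 ≤ t → c / 2 * Real.exp t ≤ ‖(Real.exp t : ℂ) - z₁‖ := by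
    intro t ht
    have hE1 : 1 ≤ Real.exp t := Real.one_le_exp ht
    have hb1 : Real.exp t - 1 ≤ ‖(Real.exp t : ℂ) - z₁‖ := by
      have h := norm_sub_norm_le ((Real.exp t : ℂ)) z₁
      simp only [Complex.norm_real, Real.norm_eq_abs,
        abs_of_pos (Real.exp_pos t)] at h
      linarith [h, hz1]
    have hb2 : δ ≤ ‖(Real.exp t : ℂ) - z₁‖ := by
      have h1' : Complex.normSq (1 - z₁) ≤ Complex.normSq ((Real.exp t : ℂ) - z₁) := by
        simp only [Complex.normSq_apply, Complex.sub_re, Complex.sub_im, Complex.one_re,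
          Complex.one_im, Complex.ofReal_re, Complex.ofReal_im]
        nlinarith [hre1, hE1]
      calc δ = Real.sqrt (Complex.normSq (1 - z₁)) := by rw [hδdef, Complex.norm_def]
        _ ≤ Real.sqrt (Complex.normSq ((Real.exp t : ℂ) - z₁)) := Real.sqrt_le_sqrt h1'
        _ = _ := by rw [Complex.norm_def]
    have hcδ : c ≤ δ := min_le_left _ _
    have hc1 : c ≤ 1 := min_le_right _ _
    nlinarith [hb1, hb2, hE1, hcδ, hc1,
      mul_nonneg (sub_nonneg.2 hc1) (sub_nonneg.2 hE1)]
  -- dominating functions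
  set p : ℝ → ℝ := fun x => x ^ (σ₁ - 1) * Real.exp (-a * x) with hpdef
  set q : ℝ → ℝ := fun y => y ^ (σ₂ - 2) * Real.exp (-a * y) with hqdef
  have hp_int : IntegrableOn p (Ioi 0) := by
    have h := integrableOn_rpow_mul_exp_neg_mul_rpow (p := 1) (s := σ₁ - 1) (b := a)
      (by linarith) one_pos ha
    simpa [hpdef, Real.rpow_one] using h
  have hq_int : IntegrableOn q (Ioi 0) := by
    have h := integrableOn_rpow_mul_exp_neg_mul_rpow (p := 1) (s := σ₂ - 2) (b := a)
      (by linarith) one_pos ha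
    simpa [hqdef, Real.rpow_one] using h
  -- norm bound
  have hnorm : ∀ x ∈ Ioi (0:ℝ), ∀ y ∈ Ioi (0:ℝ), ‖f x y‖ ≤ 2 / c * (p x * q y) := by
    intro x hx y hy
    have hx0 : (0:ℝ) < x := hx
    have hy0 : (0:ℝ) < y := hy
    have hxy : (0:ℝ) ≤ x + y := by linarith
    have hEy : y ≤ Real.exp y - 1 := by linarith [Real.add_one_le_exp y]
    have hnum : (0:ℝ) ≤ x ^ (σ₁ - 1) * y ^ (σ₂ - 1) * Real.exp ((1 - a) * (x + y)) :=
      mul_nonneg (mul_nonneg (Real.rpow_nonneg hx0.le _) (Real.rpow_nonneg hy0.le _))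
        (Real.exp_nonneg _)
    have hD1 : ((Real.exp y : ℂ) - 1) = ((Real.exp y - 1 : ℝ) : ℂ) := by push_cast; ring
    have e1 : ‖((x ^ (σ₁ - 1) * y ^ (σ₂ - 1) * Real.exp ((1 - a) * (x + y)) : ℝ) : ℂ)‖
        = x ^ (σ₁ - 1) * y ^ (σ₂ - 1) * Real.exp ((1 - a) * (x + y)) := by
      rw [Complex.norm_real, Real.norm_eq_abs, abs_of_nonneg hnum]
    have e2 : ‖((Real.exp y : ℂ) - 1)‖ = Real.exp y - 1 := by
      rw [hD1, Complex.norm_real, Real.norm_eq_abs, abs_of_nonneg (by linarith)]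
    have hd2 : c / 2 * Real.exp (x + y) ≤ ‖(Real.exp (x + y) : ℂ) - z₁‖ := by
      exact key _ hxy
    have hstep : ‖f x y‖ ≤ (x ^ (σ₁ - 1) * y ^ (σ₂ - 1) * Real.exp ((1 - a) * (x + y))) /
        (y * (c / 2 * Real.exp (x + y))) := by
      rw [hfdef]
      simp only []
      rw [norm_div, norm_mul, e1, e2]
      apply div_le_div_of_nonneg_left hnum (by positivity)
      exact mul_le_mul hEy hd2 (by positivity) (by linarith)
    refine hstep.trans_eq ?_
    have hexp : Real.exp ((1 - a) * (x + y))
        = Real.exp (x + y) * (Real.exp (-a * x) * Real.exp (-a * y)) := by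
      rw [← Real.exp_add, ← Real.exp_add]; congr 1; ring
    have hy2 : y ^ (σ₂ - 1) = y ^ (σ₂ - 2) * y := by
      rw [show σ₂ - 1 = (σ₂ - 2) + 1 by ring, Real.rpow_add_one hy0.ne']
    rw [hexp, hy2, hpdef, hqdef]
    field_simp
  -- joint measurability
  have hmeas : Measurable (Function.uncurry fun y x => f x y) := by
    have m1 : Measurable fun t : ℝ => t ^ (σ₁ - 1) := meas_rpow_aux _
    have m2' : Measurable fun t : ℝ => t ^ (σ₂ - 1) := meas_rpow_aux _
    apply Measurable.div
    · exact Complex.measurable_ofReal.comp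
        (((m1.comp measurable_snd).mul (m2'.comp measurable_fst)).mul
          ((Real.measurable_exp.comp ((measurable_snd.add measurable_fst).const_mul _))))
    · apply Measurable.mul
      · exact ((Complex.measurable_ofReal.comp
          (Real.measurable_exp.comp measurable_fst)).sub measurable_const)
      · exact ((Complex.measurable_ofReal.comp
          (Real.measurable_exp.comp (measurable_snd.add measurable_fst))).sub measurable_const)
  -- inner integrability
  have hf_int : ∀ y ∈ Ioi (0:ℝ), IntegrableOn (fun x => f x y) (Ioi 0) := by
    intro y hy
    have hmy : AEStronglyMeasurable (fun x => f x y) (volume.restrict (Ioi 0)) :=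
      ((hmeas.comp (measurable_const.prodMk measurable_id)).aestronglyMeasurable)
    refine Integrable.mono' (hp_int.const_mul (2 / c * q y)) hmy ?_
    refine (ae_restrict_iff' measurableSet_Ioi).2 (ae_of_all _ fun x hx => ?_)
    exact (hnorm x hx y hy).trans_eq (by ring)
  -- the inner integral as a function of y
  set F : ℝ → ℂ := fun y => ∫ x in Ioi (0:ℝ), f x y with hFdef
  have hF_meas : AEStronglyMeasurable F (volume.restrict (Ioi 0)) := by
    have h := (hmeas.stronglyMeasurable).integral_prod_right
      (ν := volume.restrict (Ioi (0:ℝ)))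
    exact h.aestronglyMeasurable
  have hF_int : IntegrableOn F (Ioi 0) := by
    refine Integrable.mono' (hq_int.const_mul (2 / c * ∫ x in Ioi (0:ℝ), p x)) hF_meas ?_
    refine (ae_restrict_iff' measurableSet_Ioi).2 (ae_of_all _ fun y hy => ?_)
    have hb : ‖F y‖ ≤ ∫ x in Ioi (0:ℝ), 2 / c * q y * p x := by
      refine (norm_integral_le_integral_norm _).trans ?_
      refine setIntegral_mono_on ((hf_int y hy).norm) ((hp_int.const_mul _)) measurableSet_Ioi ?_
      intro x hx
      exact (hnorm x hx y hy).trans_eq (by ring)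
    rw [integral_const_mul] at hb
    exact hb.trans_eq (by ring)
  -- pointwise positivity of the real part
  have hre_pos : ∀ x ∈ Ioi (0:ℝ), ∀ y ∈ Ioi (0:ℝ), 0 < (f x y).re := by
    intro x hx y hy
    have hx0 : (0:ℝ) < x := hx
    have hy0 : (0:ℝ) < y := hy
    have hw : (0:ℝ) < ((Real.exp (x + y) : ℂ) - z₁).re := by
      have : (1:ℝ) ≤ Real.exp (x + y) := Real.one_le_exp (by linarith)
      simp only [Complex.sub_re, Complex.ofReal_re]
      linarith
    have hwne : ((Real.exp (x + y) : ℂ) - z₁) ≠ 0 := by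
      intro h; rw [h] at hw; simp at hw
    have hr : (0:ℝ) < x ^ (σ₁ - 1) * y ^ (σ₂ - 1) * Real.exp ((1 - a) * (x + y)) := by
      have := Real.rpow_pos_of_pos hx0 (σ₁ - 1)
      have := Real.rpow_pos_of_pos hy0 (σ₂ - 1)
      positivity
    have hs : (0:ℝ) < Real.exp y - 1 := by linarith [Real.add_one_le_exp y]
    have heq : f x y = (((x ^ (σ₁ - 1) * y ^ (σ₂ - 1) * Real.exp ((1 - a) * (x + y)))
        / (Real.exp y - 1) : ℝ) : ℂ) * ((Real.exp (x + y) : ℂ) - z₁)⁻¹ := by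
      rw [hfdef]
      push_cast
      rw [div_mul_eq_div_div, div_eq_mul_inv]
    rw [heq, Complex.re_ofReal_mul]
    refine mul_pos (div_pos hr hs) ?_
    rw [Complex.inv_re]
    exact div_pos hw (Complex.normSq_pos.mpr hwne)
  -- inner integral has positive real part
  have hGpos : ∀ y ∈ Ioi (0:ℝ), 0 < (F y).re := by
    intro y hy
    have hint := hf_int y hy
    have hre_eq : (F y).re = ∫ x in Ioi (0:ℝ), (f x y).re := by
      rw [hFdef]
      exact (integral_re hint).symm
    rw [hre_eq]
    rw [setIntegral_pos_iff_support_of_nonneg_ae]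
    · refine lt_of_lt_of_le ?_ (measure_mono (fun x hx => ⟨(hre_pos x hx y hy).ne', hx⟩))
      simp [Real.volume_Ioi]
    · exact (ae_restrict_iff' measurableSet_Ioi).2 (ae_of_all _ fun x hx => (hre_pos x hx y hy).le)
    · exact hint.re
  -- outer integral has positive real part
  have hI : 0 < (∫ y in Ioi (0:ℝ), F y).re := by
    have hre_eq2 : (∫ y in Ioi (0:ℝ), F y).re = ∫ y in Ioi (0:ℝ), (F y).re :=
      (integral_re hF_int).symm
    rw [hre_eq2]
    rw [setIntegral_pos_iff_support_of_nonneg_ae]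
    · refine lt_of_lt_of_le ?_ (measure_mono (fun y hy => ⟨(hGpos y hy).ne', hy⟩))
      simp [Real.volume_Ioi]
    · exact (ae_restrict_iff' measurableSet_Ioi).2 (ae_of_all _ fun y hy => (hGpos y hy).le)
    · exact hF_int.re
  -- conclusion
  have hunfold : Phi2Int a z₁ 1 σ₁ σ₂
      = (1 / ((Real.Gamma σ₁ : ℂ) * (Real.Gamma σ₂ : ℂ))) * ∫ y in Ioi (0:ℝ), F y := rfl
  rw [hunfold]
  apply mul_ne_zero
  · apply one_div_ne_zero
    exact mul_ne_zero (by exact_mod_cast (Real.Gamma_pos_of_pos h1).ne')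
      (by exact_mod_cast (Real.Gamma_pos_of_pos (by linarith)).ne')
  · intro h
    rw [h] at hI
    simp at hI
end

section
/- Let 0 < a ≤ 1 and let z₁, z₂ ∈ ℂ with 0 < |z₁| ≤ 1, 0 < |z₂| ≤ 1, z₁ ≠ 1 and z₂ ≠ 1. Then for all real σ₁ > 0 and σ₂ > 0, the quantity Φ₂(σ₁,σ₂,a,z₁,z₂) := (1/(Γ(σ₁)Γ(σ₂))) ∫_0^∞ ∫_0^∞ x^{σ₁-1} y^{σ₂-1} e^{(1-a)(x+y)} / ((e^y − z₂)(e^{x+y} − z₁)) dx dy is nonzero. -/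
open Set MeasureTheory

section Phi2Aux

lemma phi2aux_den_lb {z : ℂ} (hz : ‖z‖ ≤ 1) {t : ℝ} (ht : 0 ≤ t) :
    ‖1 - z‖ ≤ ‖(Real.exp t : ℂ) - z‖ := by
  have h1 : (1:ℝ) ≤ Real.exp t := Real.one_le_exp ht
  have hre : z.re ≤ 1 := (Complex.re_le_norm z).trans hz
  rw [Complex.norm_def, Complex.norm_def]
  apply Real.sqrt_le_sqrt
  simp only [Complex.normSq_apply, Complex.sub_re, Complex.sub_im, Complex.ofReal_re,
    Complex.ofReal_im, Complex.one_re, Complex.one_im]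
  nlinarith

lemma phi2aux_one_sub_pos {z : ℂ} (hz1 : z ≠ 1) : 0 < ‖1 - z‖ := by
  rw [norm_pos_iff, sub_ne_zero]
  exact fun h => hz1 h.symm

lemma phi2aux_den_ne {z : ℂ} (hz : ‖z‖ ≤ 1) (hz1 : z ≠ 1) {t : ℝ} (ht : 0 ≤ t) :
    (Real.exp t : ℂ) - z ≠ 0 := by
  have h := phi2aux_den_lb hz ht
  have h2 := phi2aux_one_sub_pos hz1
  intro h0
  rw [h0, norm_zero] at h
  linarith

lemma phi2aux_den_lb' {z : ℂ} (hz : ‖z‖ ≤ 1) (hz1 : z ≠ 1) {t : ℝ} (ht : 0 ≤ t) :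
    ‖1 - z‖ / 6 * Real.exp t ≤ ‖(Real.exp t : ℂ) - z‖ := by
  have h2 : ‖1 - z‖ ≤ 2 := by
    calc ‖1 - z‖ ≤ ‖1‖ + ‖z‖ := norm_sub_le 1 z
      _ ≤ 2 := by rw [norm_one]; linarith
  rcases le_or_gt (Real.exp t) 3 with h3 | h3
  · have := phi2aux_den_lb hz ht
    have h4 := phi2aux_one_sub_pos hz1
    nlinarith
  · have h5 : Real.exp t - ‖z‖ ≤ ‖(Real.exp t : ℂ) - z‖ := by
      have := norm_sub_norm_le (Real.exp t : ℂ) z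
      simp only [Complex.norm_real, Real.norm_eq_abs] at this
      rw [abs_of_pos (Real.exp_pos t)] at this
      exact this
    nlinarith [Real.exp_pos t]

lemma phi2aux_w_re_pos {z : ℂ} (hz : ‖z‖ ≤ 1) (hz1 : z ≠ 1) {t : ℝ} (ht : 0 ≤ t) :
    0 < ((1 - z) / ((Real.exp t : ℂ) - z)).re := by
  have hne : (Real.exp t : ℂ) - z ≠ 0 := phi2aux_den_ne hz hz1 ht
  have hnsq : 0 < Complex.normSq ((Real.exp t : ℂ) - z) := Complex.normSq_pos.mpr hne
  have h1 : (1:ℝ) ≤ Real.exp t := Real.one_le_exp ht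
  have hre : z.re ≤ 1 := (Complex.re_le_norm z).trans hz
  rw [Complex.div_re]
  simp only [Complex.sub_re, Complex.sub_im, Complex.ofReal_re, Complex.ofReal_im,
    Complex.one_re, Complex.one_im]
  have hnum : 0 < (1 - z.re) * (Real.exp t - z.re) + z.im * z.im := by
    rcases eq_or_ne z.im 0 with him | him
    · have h5 : z.re ≠ 1 := by
        intro h; apply hz1; apply Complex.ext <;> simp [h, him]
      have : z.re < 1 := lt_of_le_of_ne hre h5
      nlinarith
    · nlinarith [mul_self_pos.mpr him]
  calc (0:ℝ) < ((1 - z.re) * (Real.exp t - z.re) + z.im * z.im)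
        / Complex.normSq ((Real.exp t : ℂ) - z) := by positivity
    _ = (1 - z.re) * (Real.exp t - z.re) / Complex.normSq ((Real.exp t:ℂ) - z)
        + (0 - z.im) * (0 - z.im) / Complex.normSq ((Real.exp t:ℂ) - z) := by ring
    _ = _ := by norm_num

lemma phi2aux_w_im_eq (z : ℂ) (t : ℝ) :
    ((1 - z) / ((Real.exp t : ℂ) - z)).im
      = z.im * (1 - Real.exp t) / Complex.normSq ((Real.exp t : ℂ) - z) := by
  rw [Complex.div_im]
  simp only [Complex.sub_re, Complex.sub_im, Complex.ofReal_re, Complex.ofReal_im,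
    Complex.one_re, Complex.one_im]
  ring

lemma phi2aux_int_gamma {s b : ℝ} (hs : 0 < s) (hb : 0 < b) :
    IntegrableOn (fun x : ℝ => x ^ (s-1) * Real.exp (-(b*x))) (Ioi 0) := by
  have h := Real.GammaIntegral_convergent hs
  have h2 : IntegrableOn (fun x : ℝ => Real.exp (-(b*x)) * (b*x) ^ (s-1)) (Ioi 0) := by
    have h3 := (integrableOn_Ioi_comp_mul_left_iff
      (fun x : ℝ => Real.exp (-x) * x ^ (s-1)) 0 hb).mpr
    simp only [mul_zero] at h3
    exact h3 h
  have h4 := h2.const_mul ((b ^ (s-1))⁻¹)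
  apply MeasureTheory.IntegrableOn.congr_fun h4 _ measurableSet_Ioi
  intro x hx
  have hxpos : (0:ℝ) < x := hx
  simp only []
  rw [Real.mul_rpow hb.le hxpos.le]
  field_simp [ne_of_gt (Real.rpow_pos_of_pos hb (s-1))]

end Phi2Aux

section Phi2Main

variable {a : ℝ} {z₁ z₂ : ℂ} {σ₁ σ₂ : ℝ}

/-- The pointwise sign lemma: there is a direction `W` in which the integrand has
positive real part everywhere on the domain. -/
lemma phi2aux_exists_W (hz₁1 : ‖z₁‖ ≤ 1) (hz₁ : z₁ ≠ 1)
    (hz₂1 : ‖z₂‖ ≤ 1) (hz₂ : z₂ ≠ 1) (a σ₁ σ₂ : ℝ) :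
    ∃ W : ℂ, ∀ y : ℝ, 0 < y → ∀ x : ℝ, 0 < x →
      0 < (W * (((x ^ (σ₁ - 1) * y ^ (σ₂ - 1) * Real.exp ((1 - a) * (x + y)) : ℝ) : ℂ) /
        (((Real.exp y : ℂ) - z₂) * ((Real.exp (x + y) : ℂ) - z₁)))).re := by
  -- notation
  set u : ℝ → ℂ := fun t => (1 - z₂) / ((Real.exp t : ℂ) - z₂) with hu
  set v : ℝ → ℂ := fun t => (1 - z₁) / ((Real.exp t : ℂ) - z₁) with hv
  have key : ∀ y : ℝ, 0 < y → ∀ x : ℝ, 0 < x →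
      ((1 - z₂) * (1 - z₁)) *
        (((x ^ (σ₁ - 1) * y ^ (σ₂ - 1) * Real.exp ((1 - a) * (x + y)) : ℝ) : ℂ) /
          (((Real.exp y : ℂ) - z₂) * ((Real.exp (x + y) : ℂ) - z₁)))
      = ((x ^ (σ₁ - 1) * y ^ (σ₂ - 1) * Real.exp ((1 - a) * (x + y)) : ℝ) : ℂ)
          * (u y * v (x + y)) := by
    intro y hy x hx
    have hA : (Real.exp y : ℂ) - z₂ ≠ 0 := phi2aux_den_ne hz₂1 hz₂ hy.le
    have hB : (Real.exp (x+y) : ℂ) - z₁ ≠ 0 := phi2aux_den_ne hz₁1 hz₁ (by linarith)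
    simp only [hu, hv]
    field_simp
  have hN : ∀ y : ℝ, 0 < y → ∀ x : ℝ, 0 < x →
      0 < x ^ (σ₁ - 1) * y ^ (σ₂ - 1) * Real.exp ((1 - a) * (x + y)) := by
    intro y hy x hx
    have := Real.rpow_pos_of_pos hx (σ₁ - 1)
    have := Real.rpow_pos_of_pos hy (σ₂ - 1)
    positivity
  have hure : ∀ t : ℝ, 0 ≤ t → 0 < (u t).re := fun t ht => phi2aux_w_re_pos hz₂1 hz₂ ht
  have hvre : ∀ t : ℝ, 0 ≤ t → 0 < (v t).re := fun t ht => phi2aux_w_re_pos hz₁1 hz₁ ht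
  have huim : ∀ t : ℝ, (u t).im = z₂.im * (1 - Real.exp t) / Complex.normSq ((Real.exp t:ℂ) - z₂) :=
    fun t => phi2aux_w_im_eq z₂ t
  have hvim : ∀ t : ℝ, (v t).im = z₁.im * (1 - Real.exp t) / Complex.normSq ((Real.exp t:ℂ) - z₁) :=
    fun t => phi2aux_w_im_eq z₁ t
  have hexp : ∀ t : ℝ, 0 < t → 1 - Real.exp t < 0 := by
    intro t ht
    have : (1:ℝ) < Real.exp t := by
      rw [← Real.exp_zero]; exact Real.exp_lt_exp.mpr ht
    linarith
  have hnsq₂ : ∀ t : ℝ, 0 ≤ t → 0 < Complex.normSq ((Real.exp t:ℂ) - z₂) :=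
    fun t ht => Complex.normSq_pos.mpr (phi2aux_den_ne hz₂1 hz₂ ht)
  have hnsq₁ : ∀ t : ℝ, 0 ≤ t → 0 < Complex.normSq ((Real.exp t:ℂ) - z₁) :=
    fun t ht => Complex.normSq_pos.mpr (phi2aux_den_ne hz₁1 hz₁ ht)
  rcases le_or_gt (z₁.im * z₂.im) 0 with him | him
  · -- opposite (or zero) imaginary signs : use W = (1-z₂)(1-z₁), positive real part
    refine ⟨(1 - z₂) * (1 - z₁), fun y hy x hx => ?_⟩
    rw [key y hy x hx, Complex.re_ofReal_mul]
    apply mul_pos (hN y hy x hx)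
    rw [Complex.mul_re]
    have h1 : 0 < (u y).re := hure y hy.le
    have h2 : 0 < (v (x+y)).re := hvre (x+y) (by linarith)
    have h3 : (u y).im * (v (x+y)).im ≤ 0 := by
      rw [huim y, hvim (x+y)]
      rw [div_mul_div_comm]
      apply div_nonpos_of_nonpos_of_nonneg
      · have hxy : (0:ℝ) < x + y := by linarith
        have e1 := hexp y hy
        have e2 := hexp (x+y) hxy
        nlinarith [mul_nonpos_of_nonpos_of_nonneg him
          (mul_nonneg (by linarith : (0:ℝ) ≤ -(1 - Real.exp y))
            (by linarith : (0:ℝ) ≤ -(1 - Real.exp (x+y))))]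
      · exact (mul_pos (hnsq₂ y hy.le) (hnsq₁ (x+y) (by linarith))).le
    nlinarith
  · rcases mul_pos_iff.mp him with ⟨h1p, h2p⟩ | ⟨h1n, h2n⟩
    · -- both imaginary parts positive: use W = I * (1-z₂)(1-z₁), im < 0
      refine ⟨Complex.I * ((1 - z₂) * (1 - z₁)), fun y hy x hx => ?_⟩
      rw [mul_assoc, key y hy x hx, Complex.I_mul_re, Complex.im_ofReal_mul]
      rw [neg_pos]
      apply mul_neg_of_pos_of_neg (hN y hy x hx)
      rw [Complex.mul_im]
      have hu1 : 0 < (u y).re := hure y hy.le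
      have hv1 : 0 < (v (x+y)).re := hvre (x+y) (by linarith)
      have hu2 : (u y).im < 0 := by
        rw [huim y]
        exact div_neg_of_neg_of_pos (mul_neg_of_pos_of_neg h2p (hexp y hy)) (hnsq₂ y hy.le)
      have hv2 : (v (x+y)).im < 0 := by
        rw [hvim (x+y)]
        exact div_neg_of_neg_of_pos
          (mul_neg_of_pos_of_neg h1p (hexp (x+y) (by linarith))) (hnsq₁ (x+y) (by linarith))
      nlinarith
    · -- both imaginary parts negative: use W = -I * (1-z₂)(1-z₁), im > 0
      refine ⟨-Complex.I * ((1 - z₂) * (1 - z₁)), fun y hy x hx => ?_⟩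
      have hassoc : ∀ F : ℂ, -Complex.I * ((1 - z₂) * (1 - z₁)) * F
          = -(Complex.I * ((1 - z₂) * (1 - z₁) * F)) := by intro F; ring
      rw [hassoc, Complex.neg_re, Complex.I_mul_re, neg_neg, key y hy x hx,
        Complex.im_ofReal_mul]
      apply mul_pos (hN y hy x hx)
      rw [Complex.mul_im]
      have hu1 : 0 < (u y).re := hure y hy.le
      have hv1 : 0 < (v (x+y)).re := hvre (x+y) (by linarith)
      have hu2 : 0 < (u y).im := by
        rw [huim y]
        exact div_pos (mul_pos_of_neg_of_neg h2n (hexp y hy)) (hnsq₂ y hy.le)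
      have hv2 : 0 < (v (x+y)).im := by
        rw [hvim (x+y)]
        exact div_pos (mul_pos_of_neg_of_neg h1n (hexp (x+y) (by linarith)))
          (hnsq₁ (x+y) (by linarith))
      nlinarith

end Phi2Main

theorem phi2_z1_z2_ne_zero (a : ℝ) (ha : 0 < a) (ha' : a ≤ 1)
    (z₁ z₂ : ℂ) (hz₁0 : 0 < ‖z₁‖) (hz₁1 : ‖z₁‖ ≤ 1) (hz₁ : z₁ ≠ 1)
    (hz₂0 : 0 < ‖z₂‖) (hz₂1 : ‖z₂‖ ≤ 1) (hz₂ : z₂ ≠ 1)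
    (σ₁ σ₂ : ℝ) (h1 : 0 < σ₁) (h2 : 0 < σ₂) :
    Phi2Int a z₁ z₂ σ₁ σ₂ ≠ 0 := by
  have hc₁ : 0 < ‖1 - z₁‖ := phi2aux_one_sub_pos hz₁
  have hc₂ : 0 < ‖1 - z₂‖ := phi2aux_one_sub_pos hz₂
  set S : Set (ℝ × ℝ) := (Ioi (0:ℝ)) ×ˢ (Ioi (0:ℝ)) with hSdef
  have hS : MeasurableSet S := measurableSet_Ioi.prod measurableSet_Ioi
  set μ : Measure (ℝ × ℝ) := (volume.restrict (Ioi 0)).prod (volume.restrict (Ioi 0)) with hμ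
  have hμr : μ = (volume.prod volume).restrict S := Measure.prod_restrict _ _
  set F : ℝ × ℝ → ℂ := fun p =>
    ((p.2 ^ (σ₁ - 1) * p.1 ^ (σ₂ - 1) * Real.exp ((1 - a) * (p.2 + p.1)) : ℝ) : ℂ) /
      (((Real.exp p.1 : ℂ) - z₂) * ((Real.exp (p.2 + p.1) : ℂ) - z₁)) with hFdef
  -- continuity of F on S
  have hcont : ContinuousOn F S := by
    apply ContinuousOn.div
    · apply Complex.continuous_ofReal.comp_continuousOn
      apply ContinuousOn.mul
      apply ContinuousOn.mul
      · exact continuous_snd.continuousOn.rpow_const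
          (fun p hp => Or.inl (ne_of_gt (hp.2 : (0:ℝ) < p.2)))
      · exact continuous_fst.continuousOn.rpow_const
          (fun p hp => Or.inl (ne_of_gt (hp.1 : (0:ℝ) < p.1)))
      · exact (Real.continuous_exp.comp
          (continuous_const.mul (continuous_snd.add continuous_fst))).continuousOn
    · exact (((Complex.continuous_ofReal.comp
        (Real.continuous_exp.comp continuous_fst)).sub continuous_const).mul
        ((Complex.continuous_ofReal.comp
        (Real.continuous_exp.comp (continuous_snd.add continuous_fst))).sub
          continuous_const)).continuousOn
    · intro p hp
      have hp1 : (0:ℝ) < p.1 := hp.1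
      have hp2 : (0:ℝ) < p.2 := hp.2
      exact mul_ne_zero (phi2aux_den_ne hz₂1 hz₂ hp1.le)
        (phi2aux_den_ne hz₁1 hz₁ (by linarith))
  have hmeas : AEStronglyMeasurable F μ := by
    rw [hμr]; exact hcont.aestronglyMeasurable hS
  -- integrable bound
  set C : ℝ := 36 / (‖1 - z₂‖ * ‖1 - z₁‖) with hC
  set g : ℝ × ℝ → ℝ := fun p =>
    (C * (p.1 ^ (σ₂ - 1) * Real.exp (-((1+a) * p.1)))) *
      (p.2 ^ (σ₁ - 1) * Real.exp (-(a * p.2))) with hg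
  have hg2 : IntegrableOn (fun y : ℝ => y ^ (σ₂ - 1) * Real.exp (-((1+a) * y))) (Ioi 0) :=
    phi2aux_int_gamma h2 (by linarith)
  have hg1 : IntegrableOn (fun x : ℝ => x ^ (σ₁ - 1) * Real.exp (-(a * x))) (Ioi 0) :=
    phi2aux_int_gamma h1 ha
  have hgint : Integrable g μ := (hg2.const_mul C).mul_prod hg1
  have hbd : ∀ p ∈ S, ‖F p‖ ≤ g p := by
    rintro ⟨y, x⟩ ⟨hy, hx⟩
    have hy : (0:ℝ) < y := hy
    have hx : (0:ℝ) < x := hx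
    have hxy : (0:ℝ) < x + y := by linarith
    have hN : 0 < x ^ (σ₁ - 1) * y ^ (σ₂ - 1) * Real.exp ((1 - a) * (x + y)) := by
      have := Real.rpow_pos_of_pos hx (σ₁ - 1)
      have := Real.rpow_pos_of_pos hy (σ₂ - 1)
      positivity
    have hA := phi2aux_den_lb' hz₂1 hz₂ hy.le
    have hB := phi2aux_den_lb' hz₁1 hz₁ hxy.le
    have hA0 : 0 < ‖1 - z₂‖ / 6 * Real.exp y := by positivity
    have hB0 : 0 < ‖1 - z₁‖ / 6 * Real.exp (x + y) := by positivity
    have hnorm : ‖F (y, x)‖ = (x ^ (σ₁ - 1) * y ^ (σ₂ - 1) * Real.exp ((1 - a) * (x + y))) /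
        (‖(Real.exp y : ℂ) - z₂‖ * ‖(Real.exp (x+y) : ℂ) - z₁‖) := by
      rw [hFdef]
      simp only [norm_div, norm_mul, Complex.norm_real, Real.norm_eq_abs]
      rw [← abs_mul, ← abs_mul, abs_of_pos hN]
    rw [hnorm]
    have step1 : (x ^ (σ₁ - 1) * y ^ (σ₂ - 1) * Real.exp ((1 - a) * (x + y))) /
        (‖(Real.exp y : ℂ) - z₂‖ * ‖(Real.exp (x+y) : ℂ) - z₁‖)
        ≤ (x ^ (σ₁ - 1) * y ^ (σ₂ - 1) * Real.exp ((1 - a) * (x + y))) /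
        ((‖1 - z₂‖ / 6 * Real.exp y) *
          (‖1 - z₁‖ / 6 * Real.exp (x + y))) := by
      gcongr
    refine step1.trans (le_of_eq ?_)
    have hE : Real.exp ((1 - a) * (x + y))
        = Real.exp (-((1+a) * y)) * Real.exp (-(a * x)) * (Real.exp y * Real.exp (x + y)) := by
      rw [← Real.exp_add, ← Real.exp_add, ← Real.exp_add]
      ring_nf
    rw [hg, hC]
    simp only []
    rw [hE]
    have e1 := (Real.exp_pos y).ne'
    have e2 := (Real.exp_pos (x+y)).ne'
    field_simp
    ring
  have hF : Integrable F μ := by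
    apply Integrable.mono' hgint hmeas
    rw [hμr]
    exact (ae_restrict_iff' hS).mpr (Filter.Eventually.of_forall fun p hp => hbd p hp)
  -- direction of positivity
  obtain ⟨W, hW⟩ := phi2aux_exists_W hz₁1 hz₁ hz₂1 hz₂ a σ₁ σ₂
  have hWint : Integrable (fun p => W * F p) μ := hF.const_mul W
  intro h0
  rcases mul_eq_zero.mp h0 with hΓ | hI
  · have hΓ1 : (Real.Gamma σ₁ : ℂ) ≠ 0 :=
      Complex.ofReal_ne_zero.mpr (Real.Gamma_pos_of_pos h1).ne'
    have hΓ2 : (Real.Gamma σ₂ : ℂ) ≠ 0 :=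
      Complex.ofReal_ne_zero.mpr (Real.Gamma_pos_of_pos h2).ne'
    exact one_div_ne_zero (mul_ne_zero hΓ1 hΓ2) hΓ
  · -- the double integral vanishes; contradiction with pointwise positivity
    have huncur : Integrable (Function.uncurry (fun y x : ℝ =>
        ((x ^ (σ₁ - 1) * y ^ (σ₂ - 1) * Real.exp ((1 - a) * (x + y)) : ℝ) : ℂ) /
          (((Real.exp y : ℂ) - z₂) * ((Real.exp (x + y) : ℂ) - z₁))))
        ((volume.restrict (Ioi (0:ℝ))).prod (volume.restrict (Ioi (0:ℝ)))) := hF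
    have hPI : ∫ p, F p ∂μ = 0 := by
      have hii := MeasureTheory.integral_integral huncur
      calc ∫ p, F p ∂μ
          = ∫ y in Ioi (0:ℝ), ∫ x in Ioi (0:ℝ),
              ((x ^ (σ₁ - 1) * y ^ (σ₂ - 1) * Real.exp ((1 - a) * (x + y)) : ℝ) : ℂ) /
                (((Real.exp y : ℂ) - z₂) * ((Real.exp (x + y) : ℂ) - z₁)) := by
            rw [hμ]; exact hii.symm
        _ = 0 := hI
    have hzero : ∫ p, (W * F p).re ∂μ = 0 := by
      have h := integral_re hWint
      simp only [RCLike.re_to_complex] at h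
      rw [h, MeasureTheory.integral_const_mul, hPI, mul_zero, Complex.zero_re]
    have hpos : ∀ᵐ p ∂μ, 0 < (W * F p).re := by
      rw [hμr]
      exact (ae_restrict_iff' hS).mpr (Filter.Eventually.of_forall
        fun p hp => hW p.1 (hp.1 : (0:ℝ) < p.1) p.2 (hp.2 : (0:ℝ) < p.2))
    have hreint : Integrable (fun p => (W * F p).re) μ := by
      have := hWint.re
      simpa only [RCLike.re_to_complex] using this
    have haezero : (fun p => (W * F p).re) =ᵐ[μ] 0 :=
      (MeasureTheory.integral_eq_zero_iff_of_nonneg_ae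
        (hpos.mono fun p hp => hp.le) hreint).mp hzero
    have hfalse : ∀ᵐ _p ∂μ, False := by
      filter_upwards [hpos, haezero] with p hp hz
      rw [Pi.zero_apply] at hz
      exact absurd hz hp.ne'
    have hμ0 : μ univ = 0 := by
      have := hfalse
      rw [MeasureTheory.ae_iff] at this
      simpa using this
    rw [hμr, Measure.restrict_apply_univ, hSdef, Measure.prod_prod, Real.volume_Ioi] at hμ0
    simp at hμ0
end

section
/- Let 0 < a ≤ 1. Then there exists a real number σ with 1/2 < σ < 1 such that ζ(σ,a)² − ζ(2σ,a) = 0; equivalently, the analytic continuation of the double zeta function on the diagonal, ζ₂(σ,σ;a) = (ζ(σ,a)² − ζ(2σ,a))/2, has at least one real zero in (1/2, 1). -/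
open HurwitzZeta Complex Filter Topology Set

/-- If `f` has a derivative at `conj z`, then `w ↦ conj (f (conj w))` has a derivative at `z`. -/
lemma DZaux.hasDerivAt_conj_conj {f : ℂ → ℂ} {f' z : ℂ}
    (h : HasDerivAt f f' ((starRingEnd ℂ) z)) :
    HasDerivAt (fun w => (starRingEnd ℂ) (f ((starRingEnd ℂ) w))) ((starRingEnd ℂ) f') z := by
  rw [hasDerivAt_iff_tendsto_slope] at h ⊢
  have h1 : Tendsto (starRingEnd ℂ) (𝓝[≠] z) (𝓝[≠] ((starRingEnd ℂ) z)) := by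
    refine tendsto_nhdsWithin_of_tendsto_nhds_of_eventually_within _
      ((Complex.continuous_conj.tendsto z).mono_left nhdsWithin_le_nhds) ?_
    filter_upwards [self_mem_nhdsWithin] with w hw
    simpa using fun hc => hw (by simpa using congrArg (starRingEnd ℂ) hc)
  have h2 := (Complex.continuous_conj.tendsto f').comp (h.comp h1)
  refine h2.congr' ?_
  filter_upwards [self_mem_nhdsWithin] with w _
  simp only [Function.comp_apply, slope_def_field, map_div₀, map_sub, Complex.conj_conj]

/-- Conjugation symmetry for the Hurwitz zeta function. -/
lemma DZaux.hurwitzZeta_conj (a : ℝ) (ha : 0 < a) (ha' : a ≤ 1) {s : ℂ} (hs : s ≠ 1) :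
    (starRingEnd ℂ) (hurwitzZeta (a : UnitAddCircle) ((starRingEnd ℂ) s)) =
      hurwitzZeta (a : UnitAddCircle) s := by
  have hconj_ne : ∀ {w : ℂ}, w ≠ 1 → (starRingEnd ℂ) w ≠ 1 := fun {w} hw hc =>
    hw (by simpa using congrArg (starRingEnd ℂ) hc)
  have hpc : IsPreconnected ({1}ᶜ : Set ℂ) :=
    (isConnected_compl_singleton_of_one_lt_rank (rank_real_complex ▸ Nat.one_lt_ofNat) _)
      |>.isPreconnected
  have hne : (2 : ℂ) ∈ ({1}ᶜ : Set ℂ) := by norm_num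
  have key := AnalyticOnNhd.eqOn_of_preconnected_of_eventuallyEq (𝕜 := ℂ)
    (f := fun s => (starRingEnd ℂ) (hurwitzZeta (a : UnitAddCircle) ((starRingEnd ℂ) s)))
    (g := fun s => hurwitzZeta (a : UnitAddCircle) s) ?_ ?_ hpc hne ?_ (hs : s ∈ ({1}ᶜ : Set ℂ))
  · exact key
  · refine DifferentiableOn.analyticOnNhd (fun z hz => ?_) isOpen_compl_singleton
    exact (DZaux.hasDerivAt_conj_conj
      ((differentiableAt_hurwitzZeta (a : UnitAddCircle)
        (hconj_ne hz)).hasDerivAt)).differentiableAt.differentiableWithinAt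
  · refine DifferentiableOn.analyticOnNhd (fun z hz => ?_) isOpen_compl_singleton
    exact (differentiableAt_hurwitzZeta _ hz).differentiableWithinAt
  · have hV : {z : ℂ | 1 < z.re} ∈ 𝓝 (2 : ℂ) :=
      (continuous_re.isOpen_preimage _ isOpen_Ioi).mem_nhds (by norm_num)
    filter_upwards [hV] with z (hz : 1 < z.re)
    have hz' : 1 < ((starRingEnd ℂ) z).re := by simpa using hz
    have h1 := hasSum_hurwitzZeta_of_one_lt_re ⟨ha.le, ha'⟩ hz'
    have h2 := h1.map (starRingEnd ℂ).toAddMonoidHom Complex.continuous_conj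
    have h3 : ∀ n : ℕ, (starRingEnd ℂ) (1 / (n + a : ℂ) ^ ((starRingEnd ℂ) z)) =
        1 / (n + a : ℂ) ^ z := by
      intro n
      have hpos : (0 : ℝ) < n + a := by positivity
      have harg : (↑(n + a : ℝ) : ℂ).arg ≠ Real.pi := by
        rw [Complex.arg_ofReal_of_nonneg hpos.le]
        exact Real.pi_ne_zero.symm
      have hcast : (n + a : ℂ) = ((n + a : ℝ) : ℂ) := by push_cast; ring
      rw [map_div₀, map_one, hcast, Complex.cpow_conj _ _ harg, Complex.conj_conj,
        Complex.conj_ofReal]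
    have h4 : HasSum (fun n : ℕ => 1 / (n + a : ℂ) ^ z)
        ((starRingEnd ℂ) (hurwitzZeta (a : UnitAddCircle) ((starRingEnd ℂ) z))) := by
      refine h2.congr_fun fun n => ?_
      simpa using (h3 n).symm
    exact h4.unique (hasSum_hurwitzZeta_of_one_lt_re ⟨ha.le, ha'⟩ hz)

/-- The Hurwitz zeta function is real on the real axis (away from 1). -/
lemma DZaux.hurwitzZeta_ofReal (a : ℝ) (ha : 0 < a) (ha' : a ≤ 1) {σ : ℝ} (hσ : σ ≠ 1) :
    hurwitzZeta (a : UnitAddCircle) (σ : ℂ) =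
      (((hurwitzZeta (a : UnitAddCircle) (σ : ℂ)).re : ℝ) : ℂ) := by
  have hσ' : (σ : ℂ) ≠ 1 := by exact_mod_cast hσ
  have h := DZaux.hurwitzZeta_conj a ha ha' hσ'
  rw [Complex.conj_ofReal] at h
  exact (Complex.conj_eq_iff_re.mp h).symm

set_option maxHeartbeats 1000000 in
theorem diagonal_doubleZeta_exists_real_zero (a : ℝ) (ha : 0 < a) (ha' : a ≤ 1) :
    ∃ σ : ℝ, 1 / 2 < σ ∧ σ < 1 ∧
      (hurwitzZeta (a : UnitAddCircle) (σ : ℂ)) ^ 2 -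
        hurwitzZeta (a : UnitAddCircle) ((2 * σ : ℝ) : ℂ) = 0 := by
  set A : UnitAddCircle := (a : UnitAddCircle) with hA
  set Z : ℝ → ℝ := fun σ => (hurwitzZeta A (σ : ℂ)).re with hZdef
  have hZ : ∀ {σ : ℝ}, σ ≠ 1 → hurwitzZeta A (σ : ℂ) = ((Z σ : ℝ) : ℂ) :=
    fun {σ} h => DZaux.hurwitzZeta_ofReal a ha ha' h
  have contZ : ∀ {σ : ℝ}, σ ≠ 1 → ContinuousAt Z σ := by
    intro σ h
    have h' : (σ : ℂ) ≠ 1 := by exact_mod_cast h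
    exact Complex.continuous_re.continuousAt.comp
      ((differentiableAt_hurwitzZeta A h').continuousAt.comp
        Complex.continuous_ofReal.continuousAt)
  set G : ℝ → ℝ := fun σ => Z σ ^ 2 - Z (2 * σ) with hGdef
  -- behavior of (σ - 1) * Z σ near the pole, approaching along various paths
  have pole : ∀ (l : Filter ℝ) (φ : ℝ → ℝ), Tendsto φ l (𝓝 1) → (∀ᶠ σ in l, φ σ ≠ 1) →
      Tendsto (fun σ => (φ σ - 1) * Z (φ σ)) l (𝓝 1) := by
    intro l φ hφ hφne
    have t0 : Tendsto (fun σ : ℝ => ((φ σ : ℝ) : ℂ)) l (𝓝[≠] (1 : ℂ)) := by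
      refine tendsto_nhdsWithin_of_tendsto_nhds_of_eventually_within _ ?_ ?_
      · exact (Complex.continuous_ofReal.tendsto 1).comp hφ
      · filter_upwards [hφne] with σ h
        simp only [Set.mem_compl_iff, Set.mem_singleton_iff]
        exact_mod_cast h
    have t1 := (hurwitzZeta_residue_one A).comp t0
    have t2 := (Complex.continuous_re.tendsto 1).comp t1
    simp only [Complex.one_re] at t2
    refine t2.congr' ?_
    filter_upwards [hφne] with σ h
    simp only [Function.comp_apply, hZ h]
    rw [← Complex.ofReal_one, ← Complex.ofReal_sub, ← Complex.ofReal_mul, Complex.ofReal_re]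
  -- Z σ → -∞ as σ → 1⁻
  have key2 : Tendsto Z (𝓝[<] (1 : ℝ)) atBot := by
    have hne : ∀ᶠ σ : ℝ in 𝓝[<] 1, σ ≠ 1 := by
      filter_upwards [self_mem_nhdsWithin] with σ (h : σ < 1); exact ne_of_lt h
    have key1 := pole (𝓝[<] (1 : ℝ)) id (tendsto_id.mono_left nhdsWithin_le_nhds) hne
    have inv_bot : Tendsto (fun σ : ℝ => (σ - 1)⁻¹) (𝓝[<] (1 : ℝ)) atBot := by
      have t : Tendsto (fun σ : ℝ => 1 - σ) (𝓝[<] (1 : ℝ)) (𝓝[>] (0 : ℝ)) := by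
        refine tendsto_nhdsWithin_of_tendsto_nhds_of_eventually_within _ ?_ ?_
        · have tc : Continuous (fun σ : ℝ => 1 - σ) := by continuity
          have := (tc.tendsto 1).mono_left (nhdsWithin_le_nhds (s := Iio (1 : ℝ)))
          simpa using this
        · filter_upwards [self_mem_nhdsWithin] with σ (h : σ < 1)
          simpa using h
      have t2 := tendsto_neg_atTop_atBot.comp (tendsto_inv_nhdsGT_zero.comp t)
      refine t2.congr fun σ => ?_
      simp only [Function.comp_apply]
      rw [← inv_neg, neg_sub]
    have := key1.pos_mul_atBot zero_lt_one inv_bot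
    refine this.congr' ?_
    filter_upwards [hne] with σ h
    simp only [id_eq]
    rw [mul_comm (σ - 1), mul_assoc, mul_inv_cancel₀ (sub_ne_zero.mpr h), mul_one]
  -- Z (2σ) → +∞ as σ → (1/2)⁺
  have key2' : Tendsto (fun σ : ℝ => Z (2 * σ)) (𝓝[>] (1 / 2 : ℝ)) atTop := by
    have hφ : Tendsto (fun σ : ℝ => 2 * σ) (𝓝[>] (1 / 2 : ℝ)) (𝓝 1) := by
      have tc : Continuous (fun σ : ℝ => 2 * σ) := by continuity
      have := (tc.tendsto (1 / 2)).mono_left (nhdsWithin_le_nhds (s := Ioi (1 / 2 : ℝ)))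
      norm_num at this
      exact this
    have hne : ∀ᶠ σ : ℝ in 𝓝[>] (1 / 2 : ℝ), 2 * σ ≠ 1 := by
      filter_upwards [self_mem_nhdsWithin] with σ (h : 1 / 2 < σ)
      have : (1 : ℝ) < 2 * σ := by linarith
      exact ne_of_gt this
    have key1' := pole (𝓝[>] (1 / 2 : ℝ)) (fun σ => 2 * σ) hφ hne
    have inv_top : Tendsto (fun σ : ℝ => (2 * σ - 1)⁻¹) (𝓝[>] (1 / 2 : ℝ)) atTop := by
      have t : Tendsto (fun σ : ℝ => 2 * σ - 1) (𝓝[>] (1 / 2 : ℝ)) (𝓝[>] (0 : ℝ)) := by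
        refine tendsto_nhdsWithin_of_tendsto_nhds_of_eventually_within _ ?_ ?_
        · have := (hφ.sub (tendsto_const_nhds : Tendsto (fun _ : ℝ => (1 : ℝ)) _ (𝓝 1)))
          simpa using this
        · filter_upwards [self_mem_nhdsWithin] with σ (h : 1 / 2 < σ)
          have : (0 : ℝ) < 2 * σ - 1 := by linarith
          simpa using this
      exact tendsto_inv_nhdsGT_zero.comp t
    have := key1'.pos_mul_atTop zero_lt_one inv_top
    refine this.congr' ?_
    filter_upwards [hne] with σ h
    rw [mul_comm (2 * σ - 1), mul_assoc, mul_inv_cancel₀ (sub_ne_zero.mpr h), mul_one]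
  -- G → +∞ as σ → 1⁻
  have keyG1 : Tendsto G (𝓝[<] (1 : ℝ)) atTop := by
    have h1 : Tendsto (fun σ : ℝ => Z σ ^ 2) (𝓝[<] (1 : ℝ)) atTop := by
      have := key2.atBot_mul_atBot₀ key2
      exact this.congr fun σ => (pow_two _).symm
    have h2 : Tendsto (fun σ : ℝ => Z (2 * σ)) (𝓝[<] (1 : ℝ)) (𝓝 (Z 2)) := by
      have hφ : Tendsto (fun σ : ℝ => 2 * σ) (𝓝[<] (1 : ℝ)) (𝓝 2) := by
        have tc : Continuous (fun σ : ℝ => 2 * σ) := by continuity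
        have := (tc.tendsto 1).mono_left (nhdsWithin_le_nhds (s := Iio (1 : ℝ)))
        norm_num at this
        exact this
      exact (contZ (by norm_num)).tendsto.comp hφ
    have := h1.atTop_add h2.neg
    exact this.congr fun σ => (sub_eq_add_neg _ _).symm
  -- G → -∞ as σ → (1/2)⁺
  have keyG2 : Tendsto G (𝓝[>] (1 / 2 : ℝ)) atBot := by
    have h1 : Tendsto (fun σ : ℝ => Z σ ^ 2) (𝓝[>] (1 / 2 : ℝ)) (𝓝 (Z (1 / 2) ^ 2)) := by
      have : Tendsto Z (𝓝[>] (1 / 2 : ℝ)) (𝓝 (Z (1 / 2))) :=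
        ((contZ (by norm_num)).tendsto).mono_left nhdsWithin_le_nhds
      exact this.pow 2
    have h2 := tendsto_neg_atTop_atBot.comp key2'
    have := h1.add_atBot h2
    refine this.congr fun σ => ?_
    simp only [Function.comp_apply]
    exact (sub_eq_add_neg _ _).symm
  -- pick σ₁ close to 1/2 with G σ₁ < 0
  have hhalf : ((1 : ℝ) / 2) < 1 := by norm_num
  obtain ⟨σ₁, hσ₁mem, hσ₁neg⟩ : ∃ σ₁ : ℝ, σ₁ ∈ Ioo (1 / 2 : ℝ) 1 ∧ G σ₁ < 0 := by
    have h1 : ∀ᶠ σ in 𝓝[>] (1 / 2 : ℝ), G σ < 0 := keyG2.eventually (eventually_lt_atBot 0)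
    have h2 : Ioo (1 / 2 : ℝ) 1 ∈ 𝓝[>] (1 / 2 : ℝ) := Ioo_mem_nhdsGT_of_mem ⟨le_refl _, hhalf⟩
    exact ((Filter.eventually_of_mem h2 (fun σ hσ => hσ) : ∀ᶠ σ in 𝓝[>] (1/2:ℝ), σ ∈ Ioo (1/2:ℝ) 1).and h1).exists
  -- pick σ₂ close to 1 with G σ₂ > 0 and σ₁ < σ₂
  obtain ⟨σ₂, hσ₂mem, hσ₂pos⟩ : ∃ σ₂ : ℝ, σ₂ ∈ Ioo σ₁ 1 ∧ 0 < G σ₂ := by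
    have h1 : ∀ᶠ σ in 𝓝[<] (1 : ℝ), 0 < G σ := keyG1.eventually (eventually_gt_atTop 0)
    have h2 : Ioo σ₁ 1 ∈ 𝓝[<] (1 : ℝ) := Ioo_mem_nhdsLT_of_mem ⟨hσ₁mem.2, le_refl _⟩
    exact ((Filter.eventually_of_mem h2 (fun σ hσ => hσ) : ∀ᶠ σ in 𝓝[<] (1:ℝ), σ ∈ Ioo σ₁ 1).and h1).exists
  -- IVT
  have hcont : ContinuousOn G (Icc σ₁ σ₂) := by
    intro σ hσ
    have hσl : 1 / 2 < σ := lt_of_lt_of_le hσ₁mem.1 hσ.1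
    have hσr : σ < 1 := lt_of_le_of_lt hσ.2 hσ₂mem.2
    have c1 : ContinuousAt (fun σ : ℝ => Z σ ^ 2) σ := (contZ (ne_of_lt hσr)).pow 2
    have c2 : ContinuousAt (fun σ : ℝ => Z (2 * σ)) σ := by
      have h2σ : (2 * σ : ℝ) ≠ 1 := ne_of_gt (by linarith)
      exact (contZ h2σ).comp ((continuous_const.mul continuous_id).continuousAt)
    exact (c1.sub c2).continuousWithinAt
  have h0 : (0 : ℝ) ∈ Ioo (G σ₁) (G σ₂) := ⟨hσ₁neg, hσ₂pos⟩
  obtain ⟨σ, hσmem, hσeq⟩ := intermediate_value_Ioo (le_of_lt hσ₂mem.1) hcont h0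
  refine ⟨σ, lt_trans hσ₁mem.1 hσmem.1, lt_trans hσmem.2 hσ₂mem.2, ?_⟩
  have hσ1 : σ ≠ 1 := ne_of_lt (lt_trans hσmem.2 hσ₂mem.2)
  have h2σ1 : (2 * σ : ℝ) ≠ 1 := by
    have : 1 / 2 < σ := lt_trans hσ₁mem.1 hσmem.1
    exact ne_of_gt (by linarith)
  rw [hZ hσ1, hZ h2σ1]
  rw [show ((Z σ : ℝ) : ℂ) ^ 2 - ((Z (2 * σ) : ℝ) : ℂ) = ((Z σ ^ 2 - Z (2 * σ) : ℝ) : ℂ) by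
    push_cast; ring]
  rw [show Z σ ^ 2 - Z (2 * σ) = G σ from rfl, hσeq]
  exact Complex.ofReal_zero
end
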